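/- arXiv:1507.06412 — 7 statements merged into one kernel-verified Lean document; each statement's English description precedes it below -/
import Mathlib

section
/- Let ξ ∈ M and let θ₁, θ₂, θ₃ : Ω → M be measurable with ∫_Ω |θ_i(ω)|^{p(ω)} dP(ω) < ∞ for i = 1,2,3. Then for every s ∈ ℝ the function ω ↦ A(ω, ξ + θ₁(ω) + s θ₂(ω))·θ₃(ω) is P-integrable, and the map s ↦ ∫_Ω A(ω, ξ + θ₁(ω) + s θ₂(ω))·θ₃(ω) dP(ω) is continuous on ℝ. -/
open MeasureTheory ENNReal
open scoped RealInnerProductSpace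

/-- `Md d`: the space of symmetric `d × d` real matrices, identified (as in the paper)
with the Euclidean space `ℝ^{d(d+1)/2}`. -/
abbrev Md (d : ℕ) : Type := EuclideanSpace ℝ (Fin (d * (d + 1) / 2))

/-!
By Young's inequality with the conjugate exponents `p'(ω)` and `p(ω)` and the growth bound on `A`,
`|A(ω, η)·θ₃(ω)| ≤ c₁ |η|^{p(ω)} + c₁ + |θ₃(ω)|^{p(ω)}`. For `η = ξ + θ₁ + s θ₂` with `|s| ≤ r`,
and since `p` takes values in `[α, β]`, the right-hand side is dominated by a single integrable
function of `ω` depending only on `r`. This gives integrability, and continuity in `s` follows by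
dominated convergence.
-/

lemma Real.rpow_le_one_add_rpow {t q b : ℝ} (ht : 0 ≤ t) (hq : 0 ≤ q) (hqb : q ≤ b) :
    t ^ q ≤ 1 + t ^ b := by
  rcases le_or_gt t 1 with ht1 | ht1
  · linarith [Real.rpow_le_one ht ht1 hq, Real.rpow_nonneg ht b]
  · linarith [Real.rpow_le_rpow_of_exponent_le ht1.le hqb]

lemma Real.add_add_rpow_le {a b c q : ℝ} (ha : 0 ≤ a) (hb : 0 ≤ b) (hc : 0 ≤ c) (hq : 1 ≤ q) :
    (a + b + c) ^ q ≤ 3 ^ (q - 1) * (a ^ q + b ^ q + c ^ q) := by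
  have h := Real.rpow_sum_le_const_mul_sum_rpow_of_nonneg (s := Finset.univ) (f := ![a, b, c]) hq
    (by simp [Fin.forall_fin_succ, ha, hb, hc])
  simpa [Fin.sum_univ_three, add_assoc] using h

lemma norm_add_add_smul_rpow_le {E : Type*} [SeminormedAddCommGroup E] [NormedSpace ℝ E]
    (x y z : E) {s r q b : ℝ} (hs : |s| ≤ r) (hq : 1 ≤ q) (hqb : q ≤ b) :
    ‖x + y + s • z‖ ^ q ≤ 3 ^ b * ((1 + ‖x‖ ^ b) + ‖y‖ ^ q + (1 + r ^ b) * ‖z‖ ^ q) := by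
  have hq0 : 0 ≤ q := by linarith
  have hr : 0 ≤ r := (abs_nonneg s).trans hs
  have htri : ‖x + y + s • z‖ ≤ ‖x‖ + ‖y‖ + |s| * ‖z‖ := by
    simpa [norm_smul] using norm_add₃_le (a := x) (b := y) (c := s • z)
  have hx : ‖x‖ ^ q ≤ 1 + ‖x‖ ^ b := Real.rpow_le_one_add_rpow (norm_nonneg x) hq0 hqb
  have hsz : (|s| * ‖z‖) ^ q ≤ (1 + r ^ b) * ‖z‖ ^ q := by
    rw [Real.mul_rpow (abs_nonneg s) (norm_nonneg z)]
    gcongr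
    exact (Real.rpow_le_rpow (abs_nonneg s) hs hq0).trans (Real.rpow_le_one_add_rpow hr hq0 hqb)
  have h3 : (3 : ℝ) ^ (q - 1) ≤ 3 ^ b := Real.rpow_le_rpow_of_exponent_le (by norm_num) (by linarith)
  calc ‖x + y + s • z‖ ^ q ≤ (‖x‖ + ‖y‖ + |s| * ‖z‖) ^ q :=
        Real.rpow_le_rpow (norm_nonneg _) htri hq0
    _ ≤ 3 ^ (q - 1) * (‖x‖ ^ q + ‖y‖ ^ q + (|s| * ‖z‖) ^ q) :=
        Real.add_add_rpow_le (norm_nonneg _) (norm_nonneg _) (by positivity) hq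
    _ ≤ 3 ^ b * ((1 + ‖x‖ ^ b) + ‖y‖ ^ q + (1 + r ^ b) * ‖z‖ ^ q) := by
        gcongr

lemma abs_real_inner_le_rpow_conjExponent_add_rpow {F : Type*} [SeminormedAddCommGroup F]
    [InnerProductSpace ℝ F] (u v : F) {q : ℝ} (hq : 1 < q) :
    |⟪u, v⟫| ≤ ‖u‖ ^ (q / (q - 1)) + ‖v‖ ^ q := by
  have hconj : (q / (q - 1)).HolderConjugate q := (Real.HolderConjugate.conjExponent hq).symm
  have hyoung := Real.young_inequality_of_nonneg (norm_nonneg u) (norm_nonneg v) hconj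
  have hu : ‖u‖ ^ (q / (q - 1)) / (q / (q - 1)) ≤ ‖u‖ ^ (q / (q - 1)) :=
    div_le_self (by positivity) hconj.lt.le
  have hv : ‖v‖ ^ q / q ≤ ‖v‖ ^ q := div_le_self (by positivity) hq.le
  linarith [abs_real_inner_le_norm u v]

lemma measurable_apply_of_caratheodory {Ω X Y : Type*} [MeasurableSpace Ω]
    [TopologicalSpace X] [TopologicalSpace.MetrizableSpace X] [SecondCountableTopology X]
    [MeasurableSpace X] [OpensMeasurableSpace X]
    [TopologicalSpace Y] [TopologicalSpace.PseudoMetrizableSpace Y] [MeasurableSpace Y] [BorelSpace Y]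
    {A : Ω → X → Y} (hAmeas : ∀ x, Measurable fun ω => A ω x) (hAcont : ∀ ω, Continuous (A ω))
    {η : Ω → X} (hη : Measurable η) :
    Measurable fun ω => A ω (η ω) :=
  (measurable_uncurry_of_continuous_of_measurable (u := fun x ω => A ω x) hAcont hAmeas).comp
    (hη.prodMk measurable_id)

lemma integrable_norm_rpow_of_lintegral_lt_top {Ω E : Type*} [MeasurableSpace Ω] {P : Measure Ω}
    [NormedAddCommGroup E] [MeasurableSpace E] [OpensMeasurableSpace E]
    {p : Ω → ℝ} (hp : Measurable p) {θ : Ω → E} (hθ : Measurable θ)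
    (hθint : ∫⁻ ω, ENNReal.ofReal (‖θ ω‖ ^ p ω) ∂P < ⊤) :
    Integrable (fun ω => ‖θ ω‖ ^ p ω) P :=
  ⟨(hθ.norm.pow hp).aestronglyMeasurable,
    (hasFiniteIntegral_iff_ofReal (ae_of_all _ fun ω => by positivity)).2 hθint⟩

lemma continuous_integral_of_dominated_on_balls {V Ω E : Type*} [SeminormedAddCommGroup V]
    [MeasurableSpace Ω] {P : Measure Ω} [NormedAddCommGroup E] [NormedSpace ℝ E]
    {F : V → Ω → E} (bound : ℝ → Ω → ℝ)
    (hF_meas : ∀ s, AEStronglyMeasurable (F s) P)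
    (h_bound : ∀ r s, ‖s‖ ≤ r → ∀ ω, ‖F s ω‖ ≤ bound r ω)
    (bound_integrable : ∀ r, Integrable (bound r) P)
    (h_cont : ∀ ω, Continuous fun s => F s ω) :
    Continuous fun s => ∫ ω, F s ω ∂P := by
  refine continuous_iff_continuousAt.2 fun s₀ => ?_
  refine continuousAt_of_dominated (bound := bound (‖s₀‖ + 1)) (.of_forall hF_meas) ?_
    (bound_integrable _) (ae_of_all _ fun ω => (h_cont ω).continuousAt)
  filter_upwards [Metric.ball_mem_nhds s₀ one_pos] with s hs
  exact ae_of_all _ (h_bound _ s (norm_lt_of_mem_ball hs).le)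

theorem stmt3_general
    {d : ℕ}
    {Ω : Type*} [MeasurableSpace Ω] (P : Measure Ω) [IsProbabilityMeasure P]
    (p : Ω → ℝ) (hp : Measurable p)
    (α β : ℝ) (hα : 1 < α) (hαp : ∀ ω, α ≤ p ω) (hpβ : ∀ ω, p ω ≤ β)
    (A : Ω → Md d → Md d)
    (hAmeas : ∀ ξ : Md d, Measurable (fun ω => A ω ξ))
    (hAcont : ∀ ω, Continuous (A ω))
    (c₁ : ℝ) (hc₁ : 0 < c₁)
    (hAgrowth : ∀ ω (ξ : Md d), ‖A ω ξ‖ ^ (p ω / (p ω - 1)) ≤ c₁ * ‖ξ‖ ^ p ω + c₁)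
    (ξ : Md d) (θ₁ θ₂ θ₃ : Ω → Md d)
    (hθ₁ : Measurable θ₁) (hθ₂ : Measurable θ₂) (hθ₃ : Measurable θ₃)
    (hθ₁int : ∫⁻ ω, ENNReal.ofReal (‖θ₁ ω‖ ^ p ω) ∂P < ⊤)
    (hθ₂int : ∫⁻ ω, ENNReal.ofReal (‖θ₂ ω‖ ^ p ω) ∂P < ⊤)
    (hθ₃int : ∫⁻ ω, ENNReal.ofReal (‖θ₃ ω‖ ^ p ω) ∂P < ⊤) :
    (∀ s : ℝ, Integrable (fun ω => ⟪A ω (ξ + θ₁ ω + s • θ₂ ω), θ₃ ω⟫) P)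
    ∧ Continuous (fun s : ℝ => ∫ ω, ⟪A ω (ξ + θ₁ ω + s • θ₂ ω), θ₃ ω⟫ ∂P) := by
  set D : ℝ → Ω → ℝ := fun r ω => c₁ * (3 ^ β * ((1 + ‖ξ‖ ^ β) + ‖θ₁ ω‖ ^ p ω
    + (1 + r ^ β) * ‖θ₂ ω‖ ^ p ω)) + c₁ + ‖θ₃ ω‖ ^ p ω
  have hD_bound : ∀ r (s : ℝ), ‖s‖ ≤ r → ∀ ω, ‖⟪A ω (ξ + θ₁ ω + s • θ₂ ω), θ₃ ω⟫‖ ≤ D r ω := by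
    intro r s hs ω
    have hp1 : 1 < p ω := hα.trans_le (hαp ω)
    have hη := norm_add_add_smul_rpow_le ξ (θ₁ ω) (θ₂ ω) hs hp1.le (hpβ ω)
    calc ‖⟪A ω (ξ + θ₁ ω + s • θ₂ ω), θ₃ ω⟫‖
        ≤ ‖A ω (ξ + θ₁ ω + s • θ₂ ω)‖ ^ (p ω / (p ω - 1)) + ‖θ₃ ω‖ ^ p ω :=
          abs_real_inner_le_rpow_conjExponent_add_rpow _ _ hp1
      _ ≤ D r ω := by
          linarith [hAgrowth ω (ξ + θ₁ ω + s • θ₂ ω), mul_le_mul_of_nonneg_left hη hc₁.le]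
  have hI₁ := integrable_norm_rpow_of_lintegral_lt_top hp hθ₁ hθ₁int
  have hI₂ := integrable_norm_rpow_of_lintegral_lt_top hp hθ₂ hθ₂int
  have hI₃ := integrable_norm_rpow_of_lintegral_lt_top hp hθ₃ hθ₃int
  have hD_int : ∀ r, Integrable (D r) P := fun r =>
    (((((integrable_const _).add hI₁).add (hI₂.const_mul _)).const_mul _).const_mul c₁
      |>.add (integrable_const c₁)).add hI₃
  have hmeas : ∀ s : ℝ, AEStronglyMeasurable (fun ω => ⟪A ω (ξ + θ₁ ω + s • θ₂ ω), θ₃ ω⟫) P :=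
    fun s => ((measurable_apply_of_caratheodory hAmeas hAcont
      ((measurable_const.add hθ₁).add (hθ₂.const_smul s))).inner hθ₃).aestronglyMeasurable
  refine ⟨fun s => (hD_int ‖s‖).mono' (hmeas s) (ae_of_all _ (hD_bound _ s le_rfl)), ?_⟩
  exact continuous_integral_of_dominated_on_balls D hmeas hD_bound hD_int fun ω =>
    ((hAcont ω).comp (by fun_prop)).inner continuous_const

/-- for `θ₁, θ₂, θ₃` with finite `p(⬝)`-integrals, the function
`ω ↦ A(ω, ξ + θ₁(ω) + s θ₂(ω))·θ₃(ω)` is `P`-integrable for each `s ∈ ℝ` and the map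
`s ↦ ∫_Ω A(ω, ξ + θ₁(ω) + s θ₂(ω))·θ₃(ω) dP(ω)` is continuous on `ℝ`. -/
theorem stmt3
    {d : ℕ} (hd : 1 ≤ d)
    {Ω : Type*} [MeasurableSpace Ω] (P : Measure Ω) [IsProbabilityMeasure P]
    (p : Ω → ℝ) (hp : Measurable p)
    (α β : ℝ) (hα : 1 < α) (hαp : ∀ ω, α ≤ p ω) (hpβ : ∀ ω, p ω ≤ β)
    (A : Ω → Md d → Md d)
    (hAmeas : ∀ ξ : Md d, Measurable (fun ω => A ω ξ))
    (hAcont : ∀ ω, Continuous (A ω))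
    (c₁ : ℝ) (hc₁ : 0 < c₁)
    (hAgrowth : ∀ ω (ξ : Md d), ‖A ω ξ‖ ^ (p ω / (p ω - 1)) ≤ c₁ * ‖ξ‖ ^ p ω + c₁)
    (ξ : Md d) (θ₁ θ₂ θ₃ : Ω → Md d)
    (hθ₁ : Measurable θ₁) (hθ₂ : Measurable θ₂) (hθ₃ : Measurable θ₃)
    (hθ₁int : ∫⁻ ω, ENNReal.ofReal (‖θ₁ ω‖ ^ p ω) ∂P < ⊤)
    (hθ₂int : ∫⁻ ω, ENNReal.ofReal (‖θ₂ ω‖ ^ p ω) ∂P < ⊤)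
    (hθ₃int : ∫⁻ ω, ENNReal.ofReal (‖θ₃ ω‖ ^ p ω) ∂P < ⊤) :
    (∀ s : ℝ, Integrable (fun ω => ⟪A ω (ξ + θ₁ ω + s • θ₂ ω), θ₃ ω⟫) P)
    ∧ Continuous (fun s : ℝ => ∫ ω, ⟪A ω (ξ + θ₁ ω + s • θ₂ ω), θ₃ ω⟫ ∂P) :=
  stmt3_general P p hp α β hα hαp hpβ A hAmeas hAcont c₁ hc₁ hAgrowth ξ θ₁ θ₂ θ₃ hθ₁ hθ₂ hθ₃ hθ₁int
    hθ₂int hθ₃int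
end

section
/- (Minty's lemma for the cell problem.) Let ξ ∈ M and η ∈ S, and suppose that ∫_Ω A(ω, ξ + ζ(ω))·(η(ω) − ζ(ω)) dP(ω) ≤ 0 for every ζ ∈ S. Then η solves the cell problem: ∫_Ω A(ω, ξ + η(ω))·θ(ω) dP(ω) = 0 for every θ ∈ S. -/
open MeasureTheory ENNReal
open scoped RealInnerProductSpace

/-!
Minty's trick: testing the hypothesis with `ζ = η + t θ` gives `t · F(t) ≥ 0` for every real `t`,
where `F(t) = ∫ A(ω, ξ + η + t θ) · θ dP`. Young's inequality and the growth bound dominate the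
integrand uniformly for `|t| ≤ 1` by an integrable function, so `F` is continuous at `0` by
dominated convergence, and the sign condition on both sides of `0` forces `F(0) = 0`.
-/

lemma Real.eq_zero_of_continuousAt_of_forall_mul_nonneg {F : ℝ → ℝ} (hF : ContinuousAt F 0)
    (h : ∀ t, 0 ≤ t * F t) : F 0 = 0 := by
  have hright : 0 ≤ F 0 :=
    ge_of_tendsto (hF.tendsto.mono_left nhdsWithin_le_nhds) <|
      eventually_nhdsWithin_of_forall (s := Set.Ioi 0) fun t ht =>
        nonneg_of_mul_nonneg_right (h t) ht
  have hleft : F 0 ≤ 0 :=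
    le_of_tendsto (hF.tendsto.mono_left nhdsWithin_le_nhds) <|
      eventually_nhdsWithin_of_forall (s := Set.Iio 0) fun t ht =>
        nonpos_of_mul_nonneg_right (h t) ht
  exact le_antisymm hleft hright

lemma Real.rpow_le_two_rpow_mul_rpow_add_rpow_of_le_add {r a b p β : ℝ} (hr : 0 ≤ r)
    (ha : 0 ≤ a) (hb : 0 ≤ b) (hrab : r ≤ a + b) (hp : 0 ≤ p) (hpβ : p ≤ β) :
    r ^ p ≤ 2 ^ β * (a ^ p + b ^ p) := calc
  r ^ p ≤ (2 * max a b) ^ p := by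
    gcongr; rw [two_mul]; exact hrab.trans (add_le_add (le_max_left _ _) (le_max_right _ _))
  _ = 2 ^ p * max (a ^ p) (b ^ p) := by
    rw [Real.mul_rpow zero_le_two (le_max_of_le_left ha), Real.rpow_max ha hb hp]
  _ ≤ 2 ^ β * (a ^ p + b ^ p) := by
    gcongr ?_ * ?_
    · exact Real.rpow_le_rpow_of_exponent_le one_le_two hpβ
    · exact max_le_add_of_nonneg (by positivity) (by positivity)

lemma abs_real_inner_le_norm_rpow_add_norm_rpow {E : Type*} [NormedAddCommGroup E]
    [InnerProductSpace ℝ E] {p : ℝ} (hp : 1 < p) (x y : E) :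
    |⟪x, y⟫| ≤ ‖x‖ ^ (p / (p - 1)) + ‖y‖ ^ p := calc
  |⟪x, y⟫| ≤ ‖x‖ * ‖y‖ := abs_real_inner_le_norm x y
  _ ≤ ‖x‖ ^ (p / (p - 1)) / (p / (p - 1)) + ‖y‖ ^ p / p :=
    Real.young_inequality_of_nonneg (norm_nonneg _) (norm_nonneg _)
      (Real.HolderConjugate.conjExponent hp).symm
  _ ≤ ‖x‖ ^ (p / (p - 1)) + ‖y‖ ^ p := by
    gcongr
    · exact div_le_self (by positivity) (Real.HolderConjugate.conjExponent hp).symm.lt.le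
    · exact div_le_self (by positivity) hp.le

section VariableExponent

variable {Ω E : Type*} [MeasurableSpace Ω] {P : Measure Ω} {p : Ω → ℝ} {β : ℝ}
  [NormedAddCommGroup E] [MeasurableSpace E] [BorelSpace E] [SecondCountableTopology E]

lemma integrable_const_rpow [IsFiniteMeasure P] (hp : Measurable p) (hp0 : ∀ ω, 0 ≤ p ω)
    (hpβ : ∀ ω, p ω ≤ β) {c : ℝ} (hc : 0 ≤ c) : Integrable (fun ω => c ^ p ω) P := by
  refine .of_bound (measurable_const.pow hp).aestronglyMeasurable (max 1 c ^ β) <|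
    ae_of_all _ fun ω => ?_
  rw [Real.norm_of_nonneg (by positivity)]
  calc c ^ p ω ≤ max 1 c ^ p ω := Real.rpow_le_rpow hc (le_max_right _ _) (hp0 ω)
    _ ≤ max 1 c ^ β := Real.rpow_le_rpow_of_exponent_le (le_max_left _ _) (hpβ ω)

lemma integrable_norm_add_rpow (hp : Measurable p) (hp0 : ∀ ω, 0 ≤ p ω) (hpβ : ∀ ω, p ω ≤ β)
    {f g : Ω → E} (hf : Measurable f) (hg : Measurable g)
    (hfp : Integrable (fun ω => ‖f ω‖ ^ p ω) P) (hgp : Integrable (fun ω => ‖g ω‖ ^ p ω) P) :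
    Integrable (fun ω => ‖f ω + g ω‖ ^ p ω) P := by
  refine ((hfp.add hgp).const_mul (2 ^ β)).mono'
    ((hf.add hg).norm.pow hp).aestronglyMeasurable (ae_of_all _ fun ω => ?_)
  rw [Real.norm_of_nonneg (by positivity)]
  exact Real.rpow_le_two_rpow_mul_rpow_add_rpow_of_le_add (norm_nonneg _) (norm_nonneg _)
    (norm_nonneg _) (norm_add_le _ _) (hp0 ω) (hpβ ω)

lemma continuousAt_integral_inner_apply_add_smul [InnerProductSpace ℝ E] [IsFiniteMeasure P]
    {A : Ω → E → E} (hAmeas : ∀ x, Measurable (fun ω => A ω x)) (hAcont : ∀ ω, Continuous (A ω))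
    (hp1 : ∀ ω, 1 < p ω) (hpβ : ∀ ω, p ω ≤ β) {c : ℝ} (hc : 0 ≤ c)
    (hAgrowth : ∀ ω x, ‖A ω x‖ ^ (p ω / (p ω - 1)) ≤ c * ‖x‖ ^ p ω + c)
    {u θ : Ω → E} (hu : Measurable u) (hθ : Measurable θ)
    (hup : Integrable (fun ω => ‖u ω‖ ^ p ω) P) (hθp : Integrable (fun ω => ‖θ ω‖ ^ p ω) P) :
    ContinuousAt (fun t : ℝ => ∫ ω, ⟪A ω (u ω + t • θ ω), θ ω⟫ ∂P) 0 := by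
  have hAjoint : Measurable (Function.uncurry fun x ω => A ω x) :=
    measurable_uncurry_of_continuous_of_measurable hAcont hAmeas
  have hbound : ∀ t : ℝ, |t| ≤ 1 → ∀ ω, ‖⟪A ω (u ω + t • θ ω), θ ω⟫‖ ≤
      c * (2 ^ β * (‖u ω‖ ^ p ω + ‖θ ω‖ ^ p ω)) + c + ‖θ ω‖ ^ p ω := by
    intro t ht ω
    have hz : ‖u ω + t • θ ω‖ ≤ ‖u ω‖ + ‖θ ω‖ := by
      refine (norm_add_le _ _).trans (add_le_add_right ?_ _)
      rw [norm_smul]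
      exact mul_le_of_le_one_left (norm_nonneg _) ht
    have hzp := Real.rpow_le_two_rpow_mul_rpow_add_rpow_of_le_add (norm_nonneg _) (norm_nonneg _)
      (norm_nonneg _) hz (zero_le_one.trans (hp1 ω).le) (hpβ ω)
    rw [Real.norm_eq_abs]
    linarith [abs_real_inner_le_norm_rpow_add_norm_rpow (hp1 ω) (A ω (u ω + t • θ ω)) (θ ω),
      hAgrowth ω (u ω + t • θ ω), mul_le_mul_of_nonneg_left hzp hc]
  refine continuousAt_of_dominated (.of_forall fun t => ?_) ?_
    ((((hup.add hθp).const_mul (2 ^ β)).const_mul c).add (integrable_const c) |>.add hθp)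
    (ae_of_all _ fun ω => ?_)
  · exact ((hAjoint.comp ((hu.add (hθ.const_smul t)).prodMk measurable_id)).inner
      hθ).aestronglyMeasurable
  · filter_upwards [Metric.closedBall_mem_nhds (0 : ℝ) one_pos] with t ht
    exact ae_of_all _ (hbound t (by simpa using ht))
  · exact (((hAcont ω).comp (continuous_const.add (continuous_id.smul continuous_const))).inner
      continuous_const).continuousAt

end VariableExponent

theorem stmt5_general
    {d : ℕ}
    {Ω : Type*} [MeasurableSpace Ω] (P : Measure Ω) [IsProbabilityMeasure P]
    (p : Ω → ℝ) (hp : Measurable p)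
    (α β : ℝ) (hα : 1 < α) (hαp : ∀ ω, α ≤ p ω) (hpβ : ∀ ω, p ω ≤ β)
    (A : Ω → Md d → Md d)
    (hAmeas : ∀ ξ : Md d, Measurable (fun ω => A ω ξ))
    (hAcont : ∀ ω, Continuous (A ω))
    (c₁ : ℝ) (hc₁ : 0 < c₁)
    (hAgrowth : ∀ ω (ξ : Md d), ‖A ω ξ‖ ^ (p ω / (p ω - 1)) ≤ c₁ * ‖ξ‖ ^ p ω + c₁)
    -- `S` is a linear subspace of the measurable functions `Ω → M` with finite
    -- `p(⬝)`-integral and zero mean: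
    (S : Set (Ω → Md d))
    (hSmeas : ∀ w ∈ S, Measurable w)
    (hSfin : ∀ w ∈ S, ∫⁻ ω, ENNReal.ofReal (‖w ω‖ ^ p ω) ∂P < ⊤)
    (hSadd : ∀ w₁ ∈ S, ∀ w₂ ∈ S, w₁ + w₂ ∈ S)
    (hSsmul : ∀ (r : ℝ), ∀ w ∈ S, r • w ∈ S)
    (ξ : Md d) (η : Ω → Md d) (hη : η ∈ S)
    (hminty : ∀ ζ ∈ S, ∫ ω, ⟪A ω (ξ + ζ ω), η ω - ζ ω⟫ ∂P ≤ 0) :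
    ∀ θ ∈ S, ∫ ω, ⟪A ω (ξ + η ω), θ ω⟫ ∂P = 0 := by
  intro θ hθ
  have hp1 : ∀ ω, 1 < p ω := fun ω => hα.trans_le (hαp ω)
  have hp0 : ∀ ω, 0 ≤ p ω := fun ω => zero_le_one.trans (hp1 ω).le
  have hSint : ∀ w ∈ S, Integrable (fun ω => ‖w ω‖ ^ p ω) P := fun w hw =>
    ⟨((hSmeas w hw).norm.pow hp).aestronglyMeasurable,
      (hasFiniteIntegral_iff_ofReal (.of_forall fun _ => by positivity)).2 (hSfin w hw)⟩
  have hξη : Integrable (fun ω => ‖ξ + η ω‖ ^ p ω) P :=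
    integrable_norm_add_rpow hp hp0 hpβ measurable_const (hSmeas η hη)
      (integrable_const_rpow hp hp0 hpβ (norm_nonneg ξ)) (hSint η hη)
  have hsign : ∀ t : ℝ, 0 ≤ t * ∫ ω, ⟪A ω (ξ + η ω + t • θ ω), θ ω⟫ ∂P := by
    intro t
    have h := hminty (η + t • θ) (hSadd η hη _ (hSsmul t θ hθ))
    simp only [Pi.add_apply, Pi.smul_apply, sub_add_cancel_left, inner_neg_right,
      real_inner_smul_right, integral_neg, integral_const_mul] at h
    simpa only [add_assoc] using neg_nonpos.mp h
  simpa using Real.eq_zero_of_continuousAt_of_forall_mul_nonneg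
    (continuousAt_integral_inner_apply_add_smul hAmeas hAcont hp1 hpβ hc₁.le hAgrowth
      (measurable_const.add (hSmeas η hη)) (hSmeas θ hθ) hξη (hSint θ hθ)) hsign

/-- Minty's lemma for the cell problem: if `η ∈ S` satisfies
`∫_Ω A(ω, ξ + ζ(ω))·(η(ω) − ζ(ω)) dP ≤ 0` for every `ζ ∈ S`, then
`∫_Ω A(ω, ξ + η(ω))·θ(ω) dP = 0` for every `θ ∈ S`. -/
theorem stmt5
    {d : ℕ} (hd : 1 ≤ d)
    {Ω : Type*} [MeasurableSpace Ω] (P : Measure Ω) [IsProbabilityMeasure P]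
    (p : Ω → ℝ) (hp : Measurable p)
    (α β : ℝ) (hα : 1 < α) (hαp : ∀ ω, α ≤ p ω) (hpβ : ∀ ω, p ω ≤ β)
    (A : Ω → Md d → Md d)
    (hAmeas : ∀ ξ : Md d, Measurable (fun ω => A ω ξ))
    (hAcont : ∀ ω, Continuous (A ω))
    (hAmono : ∀ ω (ξ₁ ξ₂ : Md d), ξ₁ ≠ ξ₂ → 0 < ⟪A ω ξ₁ - A ω ξ₂, ξ₁ - ξ₂⟫)
    (c₁ : ℝ) (hc₁ : 0 < c₁)
    (hAgrowth : ∀ ω (ξ : Md d), ‖A ω ξ‖ ^ (p ω / (p ω - 1)) ≤ c₁ * ‖ξ‖ ^ p ω + c₁)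
    -- `S` is a linear subspace of the measurable functions `Ω → M` with finite
    -- `p(⬝)`-integral and zero mean:
    (S : Set (Ω → Md d))
    (hSmeas : ∀ w ∈ S, Measurable w)
    (hSfin : ∀ w ∈ S, ∫⁻ ω, ENNReal.ofReal (‖w ω‖ ^ p ω) ∂P < ⊤)
    (hSzero : (0 : Ω → Md d) ∈ S)
    (hSadd : ∀ w₁ ∈ S, ∀ w₂ ∈ S, w₁ + w₂ ∈ S)
    (hSsmul : ∀ (r : ℝ), ∀ w ∈ S, r • w ∈ S)
    (hSmean : ∀ w ∈ S, ∫ ω, w ω ∂P = 0)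
    (ξ : Md d) (η : Ω → Md d) (hη : η ∈ S)
    (hminty : ∀ ζ ∈ S, ∫ ω, ⟪A ω (ξ + ζ ω), η ω - ζ ω⟫ ∂P ≤ 0) :
    ∀ θ ∈ S, ∫ ω, ⟪A ω (ξ + η ω), θ ω⟫ ∂P = 0 :=
  stmt5_general P p hp α β hα hαp hpβ A hAmeas hAcont c₁ hc₁ hAgrowth S hSmeas hSfin hSadd hSsmul ξ
    η hη hminty
end

section
/- f(ξ) > 0 for every ξ ∈ M with ξ ≠ 0, and f*(ξ) > 0 for every ξ ∈ M with ξ ≠ 0. -/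
open MeasureTheory ENNReal
open scoped RealInnerProductSpace

/-- Key quantitative lower bound: if `∫ w = ξ ≠ 0` and `1 ≤ q ω ≤ B`, then
`∫⁻ ofReal (‖w‖^q/q) ≥ ofReal (λ^(B-1)/B * (‖ξ‖/2))` with `λ = min 1 (‖ξ‖/2)`. -/
lemma key_lb {Ω : Type*} [MeasurableSpace Ω] (P : Measure Ω) [IsProbabilityMeasure P]
    {d : ℕ} (q : Ω → ℝ) (B : ℝ) (hB : 1 ≤ B)
    (hq1 : ∀ ω, 1 ≤ q ω) (hqB : ∀ ω, q ω ≤ B)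
    (w : Ω → Md d) (ξ : Md d) (hξ : ξ ≠ 0) (hmean : ∫ ω, w ω ∂P = ξ) :
    ENNReal.ofReal ((min 1 (‖ξ‖ / 2)) ^ (B - 1) / B * (‖ξ‖ / 2)) ≤
      ∫⁻ ω, ENNReal.ofReal (‖w ω‖ ^ q ω / q ω) ∂P := by
  have hwInt : Integrable w P := by
    by_contra h
    rw [integral_undef h] at hmean
    exact hξ hmean.symm
  have hc : 0 < ‖ξ‖ := norm_pos_iff.mpr hξ
  set c := ‖ξ‖ with hcdef
  set lam := min 1 (c / 2) with hlamdef
  have hlam : 0 < lam := lt_min one_pos (by linarith)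
  have hlam1 : lam ≤ 1 := min_le_left _ _
  have hlamc : lam ≤ c / 2 := min_le_right _ _
  have hB0 : 0 < B := lt_of_lt_of_le one_pos hB
  set a := lam ^ (B - 1) / B with hadef
  have ha : 0 < a := div_pos (Real.rpow_pos_of_pos hlam _) hB0
  set k := fun ω => a * (‖w ω‖ - lam) with hkdef
  have hgInt : Integrable (fun ω => ‖w ω‖) P := hwInt.norm
  have hkInt : Integrable k P := (hgInt.sub (integrable_const lam)).const_mul a
  have hkpInt : Integrable (fun ω => max (k ω) 0) P := hkInt.sup (integrable_const 0)
  -- pointwise bound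
  have hpt : ∀ ω, max (k ω) 0 ≤ ‖w ω‖ ^ q ω / q ω := by
    intro ω
    have hq0 : 0 < q ω := lt_of_lt_of_le one_pos (hq1 ω)
    have ht : 0 ≤ ‖w ω‖ := norm_nonneg _
    have hR0 : 0 ≤ ‖w ω‖ ^ q ω / q ω := div_nonneg (Real.rpow_nonneg ht _) hq0.le
    rcases le_or_gt (‖w ω‖) lam with h | h
    · have hk0 : k ω ≤ 0 := mul_nonpos_of_nonneg_of_nonpos ha.le (by linarith)
      exact max_le (le_trans hk0 hR0) hR0
    · refine max_le ?_ hR0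
      set t := ‖w ω‖ with htdef
      have ht0 : 0 < t := lt_trans hlam h
      have h1 : lam ^ (B - 1) * t ≤ t ^ q ω := by
        have e1 : lam ^ (B - 1) ≤ lam ^ (q ω - 1) :=
          Real.rpow_le_rpow_of_exponent_ge hlam hlam1 (by linarith [hqB ω])
        have e2 : lam ^ (q ω - 1) ≤ t ^ (q ω - 1) :=
          Real.rpow_le_rpow hlam.le h.le (by linarith [hq1 ω])
        have e3 : t ^ (q ω - 1) * t = t ^ q ω := by
          have := (Real.rpow_add ht0 (q ω - 1) 1).symm
          simpa using this
        calc lam ^ (B - 1) * t ≤ t ^ (q ω - 1) * t := by nlinarith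
          _ = t ^ q ω := e3
      have h2 : lam ^ (B - 1) * (t - lam) ≤ t ^ q ω := by
        have : lam ^ (B - 1) * (t - lam) ≤ lam ^ (B - 1) * t := by
          have := Real.rpow_nonneg hlam.le (B - 1)
          nlinarith
        linarith
      calc a * (t - lam) = lam ^ (B - 1) * (t - lam) / B := by rw [hadef]; ring
        _ ≤ t ^ q ω / B := by gcongr
        _ ≤ t ^ q ω / q ω := by exact div_le_div_of_nonneg_left (Real.rpow_nonneg ht0.le _) hq0 (hqB ω)
  -- integral bounds
  have hgc : c ≤ ∫ ω, ‖w ω‖ ∂P := by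
    calc c = ‖∫ ω, w ω ∂P‖ := by rw [hmean]
      _ ≤ ∫ ω, ‖w ω‖ ∂P := norm_integral_le_integral_norm _
  have hint : ∫ ω, k ω ∂P = a * ((∫ ω, ‖w ω‖ ∂P) - lam) := by
    rw [hkdef]
    rw [MeasureTheory.integral_const_mul]
    congr 1
    rw [integral_sub hgInt (integrable_const lam), integral_const]
    simp
  have hεk : a * (c / 2) ≤ ∫ ω, k ω ∂P := by
    rw [hint]
    have h1 : c / 2 ≤ (∫ ω, ‖w ω‖ ∂P) - lam := by linarith
    nlinarith
  have hkkp : ∫ ω, k ω ∂P ≤ ∫ ω, max (k ω) 0 ∂P :=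
    integral_mono hkInt hkpInt fun ω => le_max_left _ _
  calc ENNReal.ofReal (a * (c / 2))
      ≤ ENNReal.ofReal (∫ ω, max (k ω) 0 ∂P) :=
        ENNReal.ofReal_le_ofReal (hεk.trans hkkp)
    _ = ∫⁻ ω, ENNReal.ofReal (max (k ω) 0) ∂P :=
        ofReal_integral_eq_lintegral_ofReal hkpInt (ae_of_all _ fun ω => le_max_right _ _)
    _ ≤ ∫⁻ ω, ENNReal.ofReal (‖w ω‖ ^ q ω / q ω) ∂P :=
        lintegral_mono fun ω => ENNReal.ofReal_le_ofReal (hpt ω)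

/-- `f(ξ) > 0` and `f*(ξ) > 0` for every `ξ ≠ 0`, where
`f(ξ) = inf_{w ∈ S} ∫_Ω |ξ + w|^{p(ω)}/p(ω) dP` and
`f*(ξ) = inf { ∫_Ω |w|^{p'(ω)}/p'(ω) dP : w ∈ S^⊥, ∫ w dP = ξ }` (`= +∞` if no such `w`). -/
theorem stmt8
    {d : ℕ} (hd : 1 ≤ d)
    {Ω : Type*} [MeasurableSpace Ω] (P : Measure Ω) [IsProbabilityMeasure P]
    (p : Ω → ℝ) (hp : Measurable p)
    (α β : ℝ) (hα : 1 < α) (hαp : ∀ ω, α ≤ p ω) (hpβ : ∀ ω, p ω ≤ β)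
    -- `S` is a linear subspace of the measurable functions `Ω → M` with finite
    -- `p(⬝)`-integral and zero mean:
    (S : Set (Ω → Md d))
    (hSmeas : ∀ w ∈ S, Measurable w)
    (hSfin : ∀ w ∈ S, ∫⁻ ω, ENNReal.ofReal (‖w ω‖ ^ p ω) ∂P < ⊤)
    (hSzero : (0 : Ω → Md d) ∈ S)
    (hSadd : ∀ w₁ ∈ S, ∀ w₂ ∈ S, w₁ + w₂ ∈ S)
    (hSsmul : ∀ (r : ℝ), ∀ w ∈ S, r • w ∈ S)
    (hSmean : ∀ w ∈ S, ∫ ω, w ω ∂P = 0)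
    (f : Md d → ℝ≥0∞)
    (hf : ∀ ξ : Md d,
      f ξ = ⨅ w : S, ∫⁻ ω, ENNReal.ofReal (‖ξ + (w : Ω → Md d) ω‖ ^ p ω / p ω) ∂P)
    (fs : Md d → ℝ≥0∞)
    (hfs : ∀ ξ : Md d,
      fs ξ = ⨅ (w : Ω → Md d) (_ : Measurable w)
        (_ : ∫⁻ ω, ENNReal.ofReal (‖w ω‖ ^ (p ω / (p ω - 1))) ∂P < ⊤)
        (_ : ∀ v ∈ S, ∫ ω, ⟪w ω, v ω⟫ ∂P = 0)
        (_ : ∫ ω, w ω ∂P = ξ),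
        ∫⁻ ω, ENNReal.ofReal (‖w ω‖ ^ (p ω / (p ω - 1)) / (p ω / (p ω - 1))) ∂P) :
    ∀ ξ : Md d, ξ ≠ 0 → 0 < f ξ ∧ 0 < fs ξ := by
  intro ξ hξ
  -- Ω is nonempty since P is a probability measure
  have hne : Nonempty Ω := by
    by_contra h
    rw [not_nonempty_iff] at h
    have h1 : P Set.univ = 1 := measure_univ
    rw [Set.univ_eq_empty_iff.mpr h, measure_empty] at h1
    exact zero_ne_one h1
  obtain ⟨ω₀⟩ := hne
  have hβ1 : 1 ≤ β := le_trans (le_trans hα.le (hαp ω₀)) (hpβ ω₀)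
  have hc : 0 < ‖ξ‖ := norm_pos_iff.mpr hξ
  have hlam : 0 < min 1 (‖ξ‖ / 2) := lt_min one_pos (by linarith)
  have hp1 : ∀ ω, 1 ≤ p ω := fun ω => le_trans hα.le (hαp ω)
  constructor
  · -- positivity of f
    rw [hf]
    have hε : (0 : ℝ≥0∞) < ENNReal.ofReal ((min 1 (‖ξ‖ / 2)) ^ (β - 1) / β * (‖ξ‖ / 2)) := by
      apply ENNReal.ofReal_pos.mpr
      exact mul_pos (div_pos (Real.rpow_pos_of_pos hlam _) (by linarith)) (by linarith)
    refine lt_of_lt_of_le hε (le_iInf ?_)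
    rintro ⟨w, hwS⟩
    have hwm := hSmeas w hwS
    have hwfin := hSfin w hwS
    -- w is integrable
    have hwInt : Integrable w P := by
      refine ⟨hwm.aestronglyMeasurable, ?_⟩
      rw [hasFiniteIntegral_iff_norm]
      have hpt : ∀ ω, ENNReal.ofReal ‖w ω‖ ≤ 1 + ENNReal.ofReal (‖w ω‖ ^ p ω) := by
        intro ω
        rcases le_or_gt (‖w ω‖) 1 with h | h
        · calc ENNReal.ofReal ‖w ω‖ ≤ ENNReal.ofReal 1 := ENNReal.ofReal_le_ofReal h
            _ = 1 := ENNReal.ofReal_one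
            _ ≤ _ := le_self_add
        · have h2 : ‖w ω‖ ≤ ‖w ω‖ ^ p ω := by
            calc ‖w ω‖ = ‖w ω‖ ^ (1 : ℝ) := (Real.rpow_one _).symm
              _ ≤ _ := Real.rpow_le_rpow_of_exponent_le h.le (hp1 ω)
          exact le_trans (ENNReal.ofReal_le_ofReal h2) le_add_self
      calc ∫⁻ ω, ENNReal.ofReal ‖w ω‖ ∂P
          ≤ ∫⁻ ω, (1 + ENNReal.ofReal (‖w ω‖ ^ p ω)) ∂P := lintegral_mono hpt
        _ = 1 * P Set.univ + ∫⁻ ω, ENNReal.ofReal (‖w ω‖ ^ p ω) ∂P := by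
            rw [lintegral_add_left measurable_const, lintegral_const]
        _ < ⊤ := by
            rw [measure_univ, mul_one]
            exact ENNReal.add_lt_top.mpr ⟨ENNReal.one_lt_top, hwfin⟩
    have hmean : ∫ ω, (ξ + w ω) ∂P = ξ := by
      rw [integral_add (integrable_const ξ) hwInt, integral_const, hSmean w hwS]
      simp
    exact key_lb P p β hβ1 hp1 hpβ (fun ω => ξ + w ω) ξ hξ hmean
  · -- positivity of fs
    rw [hfs]
    have hε : (0 : ℝ≥0∞) < ENNReal.ofReal
        ((min 1 (‖ξ‖ / 2)) ^ (α / (α - 1) - 1) / (α / (α - 1)) * (‖ξ‖ / 2)) := by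
      apply ENNReal.ofReal_pos.mpr
      have hB0 : 0 < α / (α - 1) := div_pos (by linarith) (by linarith)
      exact mul_pos (div_pos (Real.rpow_pos_of_pos hlam _) hB0) (by linarith)
    refine lt_of_lt_of_le hε (le_iInf fun w => le_iInf fun hwm => le_iInf fun hwfin =>
      le_iInf fun hworth => le_iInf fun hwmean => ?_)
    have hB : 1 ≤ α / (α - 1) := (one_le_div (by linarith)).mpr (by linarith)
    have hq1 : ∀ ω, 1 ≤ p ω / (p ω - 1) := by
      intro ω
      have := hαp ω
      exact (one_le_div (by linarith)).mpr (by linarith)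
    have hqB : ∀ ω, p ω / (p ω - 1) ≤ α / (α - 1) := by
      intro ω
      have h1 := hαp ω
      rw [div_le_div_iff₀ (by linarith) (by linarith)]
      nlinarith
    exact key_lb P (fun ω => p ω / (p ω - 1)) (α / (α - 1)) hB hq1 hqB w ξ hξ hwmean
end

section
/- Let ξ ∈ M and let v_ξ ∈ S solve the cell problem. Then A^eff(ξ) is well defined (the integrand is P-integrable), the identity A^eff(ξ)·ξ = ∫_Ω A(ω, ξ + v_ξ(ω))·(ξ + v_ξ(ω)) dP(ω) holds, and A^eff(ξ)·ξ ≥ c₀ ∫_Ω |ξ + v_ξ(ω)|^{p(ω)} dP(ω) − c₀^{-1} ≥ c₀ f(ξ) − c₀^{-1}. -/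
open MeasureTheory ENNReal
open scoped RealInnerProductSpace

/-
The solution `u = ξ + v_ξ` has finite `p(·)`-modular, so the growth bound puts `A(·, u)` in the
dual class `∫ |A|^{p'} < ∞`; Young's inequality `ab ≤ a^{p'} + b^p` then makes `A(·, u)` and its
pairings with `u` and `v_ξ` integrable. Testing the cell problem with `θ = v_ξ` kills the pairing
with `v_ξ`, which gives the energy identity `A^eff(ξ)·ξ = ∫ A(·, u)·u`; integrating the pointwise
coercivity bound gives the first inequality, and `f(ξ) ≤ ∫ |u|^p / p ≤ ∫ |u|^p` (as `p ≥ 1`)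
gives the second.
-/

namespace Real

lemma mul_le_rpow_add_rpow {a b p q : ℝ} (ha : 0 ≤ a) (hb : 0 ≤ b) (hpq : p.HolderConjugate q) :
    a * b ≤ a ^ p + b ^ q :=
  calc a * b ≤ a ^ p / p + b ^ q / q := young_inequality_of_nonneg ha hb hpq
    _ ≤ a ^ p + b ^ q := by
      gcongr
      · exact div_le_self (by positivity) hpq.lt.le
      · exact div_le_self (by positivity) hpq.symm.lt.le

lemma add_rpow_le_two_rpow_mul_rpow_add_rpow {a b p : ℝ} (ha : 0 ≤ a) (hb : 0 ≤ b)
    (hp : 0 ≤ p) : (a + b) ^ p ≤ 2 ^ p * (a ^ p + b ^ p) :=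
  calc (a + b) ^ p ≤ (2 * max a b) ^ p := by
        rw [two_mul]; gcongr <;> simp
    _ = 2 ^ p * max a b ^ p := mul_rpow zero_le_two (le_max_of_le_left ha)
    _ ≤ 2 ^ p * (a ^ p + b ^ p) := by
        gcongr
        rcases max_cases a b with ⟨h, _⟩ | ⟨h, _⟩ <;> rw [h]
        · exact le_add_of_nonneg_right (by positivity)
        · exact le_add_of_nonneg_left (by positivity)

lemma rpow_le_max_one_rpow {a p q : ℝ} (ha : 0 ≤ a) (hp : 0 ≤ p) (hpq : p ≤ q) :
    a ^ p ≤ max 1 (a ^ q) := by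
  rcases le_total a 1 with h | h
  · exact le_max_of_le_left (rpow_le_one ha h hp)
  · exact le_max_of_le_right (rpow_le_rpow_of_exponent_le h hpq)

end Real

lemma abs_real_inner_le_rpow_add_rpow {E : Type*} [NormedAddCommGroup E] [InnerProductSpace ℝ E]
    {p q : ℝ} (hpq : p.HolderConjugate q) (x y : E) :
    |⟪x, y⟫| ≤ ‖x‖ ^ q + ‖y‖ ^ p :=
  (abs_real_inner_le_norm x y).trans
    (Real.mul_le_rpow_add_rpow (norm_nonneg x) (norm_nonneg y) hpq.symm)

theorem Measurable.caratheodory_apply {Ω E F : Type*} [MeasurableSpace Ω]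
    [TopologicalSpace E] [TopologicalSpace.MetrizableSpace E] [SecondCountableTopology E]
    [MeasurableSpace E] [OpensMeasurableSpace E]
    [TopologicalSpace F] [TopologicalSpace.PseudoMetrizableSpace F] [MeasurableSpace F]
    [BorelSpace F] {A : Ω → E → F} (hAcont : ∀ ω, Continuous (A ω))
    (hAmeas : ∀ x, Measurable fun ω => A ω x) {u : Ω → E} (hu : Measurable u) :
    Measurable fun ω => A ω (u ω) :=
  (measurable_uncurry_of_continuous_of_measurable (u := fun x ω => A ω x) hAcont hAmeas).comp
    (hu.prodMk measurable_id)

section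

variable {Ω : Type*} [MeasurableSpace Ω] {μ : Measure Ω} {E : Type*} [NormedAddCommGroup E]
  {p q : Ω → ℝ}

lemma integrable_rpow_norm_const_add [MeasurableSpace E] [BorelSpace E] [IsFiniteMeasure μ]
    {β : ℝ} (hp : Measurable p) (hp0 : ∀ ω, 0 ≤ p ω) (hpβ : ∀ ω, p ω ≤ β)
    {v : Ω → E} (hv : Measurable v) (hvp : Integrable (fun ω => ‖v ω‖ ^ p ω) μ) (x : E) :
    Integrable (fun ω => ‖x + v ω‖ ^ p ω) μ := by
  refine (((integrable_const (max 1 (‖x‖ ^ β))).add hvp).const_mul (2 ^ β)).mono'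
    ((hv.const_add x).norm.pow hp).aestronglyMeasurable (ae_of_all _ fun ω => ?_)
  rw [Real.norm_of_nonneg (by positivity)]
  calc ‖x + v ω‖ ^ p ω ≤ (‖x‖ + ‖v ω‖) ^ p ω :=
        Real.rpow_le_rpow (norm_nonneg _) (norm_add_le x (v ω)) (hp0 ω)
    _ ≤ 2 ^ p ω * (‖x‖ ^ p ω + ‖v ω‖ ^ p ω) :=
        Real.add_rpow_le_two_rpow_mul_rpow_add_rpow (norm_nonneg _) (norm_nonneg _) (hp0 ω)
    _ ≤ 2 ^ β * (max 1 (‖x‖ ^ β) + ‖v ω‖ ^ p ω) :=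
        mul_le_mul (Real.rpow_le_rpow_of_exponent_le one_le_two (hpβ ω))
          (add_le_add_left (Real.rpow_le_max_one_rpow (norm_nonneg x) (hp0 ω) (hpβ ω)) _)
          (by positivity) (by positivity)

lemma Integrable.of_integrable_rpow_norm [IsFiniteMeasure μ]
    (hpq : ∀ ω, (p ω).HolderConjugate (q ω)) {F : Ω → E}
    (hF : AEStronglyMeasurable F μ) (hFq : Integrable (fun ω => ‖F ω‖ ^ q ω) μ) :
    Integrable F μ := by
  refine (hFq.add (integrable_const 1)).mono' hF (ae_of_all _ fun ω => ?_)
  simpa using Real.mul_le_rpow_add_rpow (norm_nonneg (F ω)) zero_le_one (hpq ω).symm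

lemma integrable_inner_of_integrable_rpow_norm [InnerProductSpace ℝ E]
    (hpq : ∀ ω, (p ω).HolderConjugate (q ω))
    {F w : Ω → E} (hF : AEStronglyMeasurable F μ) (hw : AEStronglyMeasurable w μ)
    (hFq : Integrable (fun ω => ‖F ω‖ ^ q ω) μ) (hwp : Integrable (fun ω => ‖w ω‖ ^ p ω) μ) :
    Integrable (fun ω => ⟪F ω, w ω⟫) μ :=
  (hFq.add hwp).mono' (hF.inner hw) (ae_of_all _ fun ω =>
    abs_real_inner_le_rpow_add_rpow (hpq ω) (F ω) (w ω))

lemma inner_integral_eq_integral_inner_add [InnerProductSpace ℝ E] [CompleteSpace E]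
    {F v : Ω → E} (hF : Integrable F μ) (hFv : Integrable (fun ω => ⟪F ω, v ω⟫) μ)
    (horth : ∫ ω, ⟪F ω, v ω⟫ ∂μ = 0) (x : E) :
    ⟪∫ ω, F ω ∂μ, x⟫ = ∫ ω, ⟪F ω, x + v ω⟫ ∂μ := by
  simp only [inner_add_right]
  rw [integral_add (hF.inner_const x) hFv, horth, add_zero, real_inner_comm, ← integral_inner hF]
  simp only [real_inner_comm x]

lemma mul_integral_sub_le_integral [IsProbabilityMeasure μ] {g h : Ω → ℝ} {c k : ℝ}
    (hg : Integrable g μ) (hh : Integrable h μ) (hgh : ∀ ω, c * g ω - k ≤ h ω) :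
    c * ∫ ω, g ω ∂μ - k ≤ ∫ ω, h ω ∂μ :=
  calc c * ∫ ω, g ω ∂μ - k = ∫ ω, (c * g ω - k) ∂μ := by
        rw [integral_sub (hg.const_mul c) (integrable_const k), integral_const_mul,
          integral_const, probReal_univ, one_smul]
    _ ≤ ∫ ω, h ω ∂μ := integral_mono ((hg.const_mul c).sub (integrable_const k)) hh hgh

lemma iInf_integral_rpow_norm_div_le {S : Set (Ω → E)} {v : Ω → E} (hv : v ∈ S)
    (hp : ∀ ω, 1 ≤ p ω) (x : E)
    (hint : Integrable (fun ω => ‖x + v ω‖ ^ p ω) μ) :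
    ⨅ w : S, ∫ ω, ‖x + (w : Ω → E) ω‖ ^ p ω / p ω ∂μ ≤ ∫ ω, ‖x + v ω‖ ^ p ω ∂μ := by
  have hnonneg : ∀ (w : Ω → E) ω, 0 ≤ ‖x + w ω‖ ^ p ω / p ω := fun w ω => by
    have := hp ω; positivity
  have hbdd : BddBelow (Set.range fun w : S => ∫ ω, ‖x + (w : Ω → E) ω‖ ^ p ω / p ω ∂μ) :=
    ⟨0, Set.forall_mem_range.2 fun w => integral_nonneg (hnonneg w)⟩
  calc _ ≤ ∫ ω, ‖x + v ω‖ ^ p ω / p ω ∂μ := ciInf_le hbdd ⟨v, hv⟩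
    _ ≤ ∫ ω, ‖x + v ω‖ ^ p ω ∂μ := integral_mono_of_nonneg (ae_of_all _ (hnonneg v)) hint
        (ae_of_all _ fun ω => div_le_self (by positivity) (hp ω))

end

theorem stmt11_general
    {d : ℕ}
    {Ω : Type*} [MeasurableSpace Ω] (P : Measure Ω) [IsProbabilityMeasure P]
    (p : Ω → ℝ) (hp : Measurable p)
    (α β : ℝ) (hα : 1 < α) (hαp : ∀ ω, α ≤ p ω) (hpβ : ∀ ω, p ω ≤ β)
    (A : Ω → Md d → Md d)
    (hAmeas : ∀ ξ : Md d, Measurable (fun ω => A ω ξ))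
    (hAcont : ∀ ω, Continuous (A ω))
    (c₀ : ℝ) (hc₀ : 0 < c₀)
    (hAcoer : ∀ ω (ξ : Md d), c₀ * ‖ξ‖ ^ p ω - c₀⁻¹ ≤ ⟪A ω ξ, ξ⟫)
    (c₁ : ℝ)
    (hAgrowth : ∀ ω (ξ : Md d), ‖A ω ξ‖ ^ (p ω / (p ω - 1)) ≤ c₁ * ‖ξ‖ ^ p ω + c₁)
    -- `S` is a linear subspace of the measurable functions `Ω → M` with finite
    -- `p(⬝)`-integral and zero mean:
    (S : Set (Ω → Md d))
    (hSmeas : ∀ w ∈ S, Measurable w)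
    (hSfin : ∀ w ∈ S, ∫⁻ ω, ENNReal.ofReal (‖w ω‖ ^ p ω) ∂P < ⊤)
    (f : Md d → ℝ)
    (hf : ∀ ζ : Md d, f ζ = ⨅ w : S, ∫ ω, ‖ζ + (w : Ω → Md d) ω‖ ^ p ω / p ω ∂P)
    (ξ : Md d) (vξ : Ω → Md d) (hvξ : vξ ∈ S)
    (hsol : ∀ θ ∈ S, ∫ ω, ⟪A ω (ξ + vξ ω), θ ω⟫ ∂P = 0) :
    Integrable (fun ω => A ω (ξ + vξ ω)) P
    ∧ ⟪∫ ω, A ω (ξ + vξ ω) ∂P, ξ⟫ = ∫ ω, ⟪A ω (ξ + vξ ω), ξ + vξ ω⟫ ∂P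
    ∧ c₀ * (∫ ω, ‖ξ + vξ ω‖ ^ p ω ∂P) - c₀⁻¹ ≤ ⟪∫ ω, A ω (ξ + vξ ω) ∂P, ξ⟫
    ∧ c₀ * f ξ - c₀⁻¹ ≤ c₀ * (∫ ω, ‖ξ + vξ ω‖ ^ p ω ∂P) - c₀⁻¹ := by
  have hp1 : ∀ ω, 1 ≤ p ω := fun ω => (hα.trans_le (hαp ω)).le
  have hpq : ∀ ω, (p ω).HolderConjugate (p ω / (p ω - 1)) := fun ω =>
    Real.HolderConjugate.conjExponent (hα.trans_le (hαp ω))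
  have hv : Measurable vξ := hSmeas vξ hvξ
  have hu : Measurable fun ω => ξ + vξ ω := hv.const_add ξ
  have hAu : Measurable fun ω => A ω (ξ + vξ ω) := hu.caratheodory_apply hAcont hAmeas
  have hv_int : Integrable (fun ω => ‖vξ ω‖ ^ p ω) P :=
    ⟨(hv.norm.pow hp).aestronglyMeasurable,
      (hasFiniteIntegral_iff_ofReal (ae_of_all _ fun ω => by positivity)).2 (hSfin vξ hvξ)⟩
  have hu_int : Integrable (fun ω => ‖ξ + vξ ω‖ ^ p ω) P :=
    integrable_rpow_norm_const_add hp (fun ω => zero_le_one.trans (hp1 ω)) hpβ hv hv_int ξ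
  have hAu_int : Integrable (fun ω => ‖A ω (ξ + vξ ω)‖ ^ (p ω / (p ω - 1))) P :=
    ((hu_int.const_mul c₁).add (integrable_const c₁)).mono'
      (hAu.norm.pow (hp.div (hp.sub_const 1))).aestronglyMeasurable
      (ae_of_all _ fun ω => by
        rw [Real.norm_of_nonneg (by positivity)]
        exact hAgrowth ω _)
  have hA_int : Integrable (fun ω => A ω (ξ + vξ ω)) P :=
    Integrable.of_integrable_rpow_norm hpq hAu.aestronglyMeasurable hAu_int
  have henergy := inner_integral_eq_integral_inner_add hA_int
    (integrable_inner_of_integrable_rpow_norm hpq hAu.aestronglyMeasurable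
      hv.aestronglyMeasurable hAu_int hv_int) (hsol vξ hvξ) ξ
  have hcoer := mul_integral_sub_le_integral hu_int
    (integrable_inner_of_integrable_rpow_norm hpq hAu.aestronglyMeasurable
      hu.aestronglyMeasurable hAu_int hu_int) (fun ω => hAcoer ω (ξ + vξ ω))
  refine ⟨hA_int, henergy, henergy ▸ hcoer, ?_⟩
  gcongr
  exact hf ξ ▸ iInf_integral_rpow_norm_div_le hvξ hp1 ξ hu_int

/-- first inequality in Lemma `l_eff-tenz`: if `v_ξ ∈ S` solves the
cell problem then `A^eff(ξ) = ∫_Ω A(ω, ξ + v_ξ(ω)) dP` is well defined,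
`A^eff(ξ)·ξ = ∫_Ω A(ω, ξ + v_ξ(ω))·(ξ + v_ξ(ω)) dP`, and
`A^eff(ξ)·ξ ≥ c₀ ∫_Ω |ξ + v_ξ|^{p(ω)} dP − c₀⁻¹ ≥ c₀ f(ξ) − c₀⁻¹`. -/
theorem stmt11
    {d : ℕ} (hd : 1 ≤ d)
    {Ω : Type*} [MeasurableSpace Ω] (P : Measure Ω) [IsProbabilityMeasure P]
    (p : Ω → ℝ) (hp : Measurable p)
    (α β : ℝ) (hα : 1 < α) (hαp : ∀ ω, α ≤ p ω) (hpβ : ∀ ω, p ω ≤ β)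
    (A : Ω → Md d → Md d)
    (hAmeas : ∀ ξ : Md d, Measurable (fun ω => A ω ξ))
    (hAcont : ∀ ω, Continuous (A ω))
    (c₀ : ℝ) (hc₀ : 0 < c₀)
    (hAcoer : ∀ ω (ξ : Md d), c₀ * ‖ξ‖ ^ p ω - c₀⁻¹ ≤ ⟪A ω ξ, ξ⟫)
    (c₁ : ℝ) (hc₁ : 0 < c₁)
    (hAgrowth : ∀ ω (ξ : Md d), ‖A ω ξ‖ ^ (p ω / (p ω - 1)) ≤ c₁ * ‖ξ‖ ^ p ω + c₁)
    -- `S` is a linear subspace of the measurable functions `Ω → M` with finite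
    -- `p(⬝)`-integral and zero mean:
    (S : Set (Ω → Md d))
    (hSmeas : ∀ w ∈ S, Measurable w)
    (hSfin : ∀ w ∈ S, ∫⁻ ω, ENNReal.ofReal (‖w ω‖ ^ p ω) ∂P < ⊤)
    (hSzero : (0 : Ω → Md d) ∈ S)
    (hSadd : ∀ w₁ ∈ S, ∀ w₂ ∈ S, w₁ + w₂ ∈ S)
    (hSsmul : ∀ (r : ℝ), ∀ w ∈ S, r • w ∈ S)
    (hSmean : ∀ w ∈ S, ∫ ω, w ω ∂P = 0)
    (f : Md d → ℝ)
    (hf : ∀ ζ : Md d, f ζ = ⨅ w : S, ∫ ω, ‖ζ + (w : Ω → Md d) ω‖ ^ p ω / p ω ∂P)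
    (ξ : Md d) (vξ : Ω → Md d) (hvξ : vξ ∈ S)
    (hsol : ∀ θ ∈ S, ∫ ω, ⟪A ω (ξ + vξ ω), θ ω⟫ ∂P = 0) :
    Integrable (fun ω => A ω (ξ + vξ ω)) P
    ∧ ⟪∫ ω, A ω (ξ + vξ ω) ∂P, ξ⟫ = ∫ ω, ⟪A ω (ξ + vξ ω), ξ + vξ ω⟫ ∂P
    ∧ c₀ * (∫ ω, ‖ξ + vξ ω‖ ^ p ω ∂P) - c₀⁻¹ ≤ ⟪∫ ω, A ω (ξ + vξ ω) ∂P, ξ⟫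
    ∧ c₀ * f ξ - c₀⁻¹ ≤ c₀ * (∫ ω, ‖ξ + vξ ω‖ ^ p ω ∂P) - c₀⁻¹ :=
  stmt11_general P p hp α β hα hαp hpβ A hAmeas hAcont c₀ hc₀ hAcoer c₁ hAgrowth S hSmeas hSfin f hf
    ξ vξ hvξ hsol
end

section
/- The effective tensor is strictly monotone: if ξ₁, ξ₂ ∈ M with ξ₁ ≠ ξ₂ and v_{ξ₁}, v_{ξ₂} ∈ S solve the cell problems for ξ₁ and ξ₂ respectively, then (A^eff(ξ₁) − A^eff(ξ₂))·(ξ₁ − ξ₂) > 0. -/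
/-!
Put `w = v₁ - v₂ ∈ S` and `Bᵢ = A(ξᵢ + vᵢ)`. Testing both cell problems with `w` shows that
`∫ (B₁ - B₂)·((ξ₁ + v₁) - (ξ₂ + v₂)) = (A^eff(ξ₁) - A^eff(ξ₂))·(ξ₁ - ξ₂)`. The integrand is
nonnegative by monotonicity of `A`, and positive wherever `w ≠ ξ₂ - ξ₁`; since `w` has mean
zero and `ξ₁ ≠ ξ₂`, this happens on a set of positive measure. The growth condition together with
Young's inequality for the exponents `p(ω)`, `p'(ω)` makes every integrand involved integrable.
-/

open MeasureTheory ENNReal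
open scoped RealInnerProductSpace

lemma Real.rpow_add_le_mul_rpow_add_rpow {a b t : ℝ} (ha : 0 ≤ a) (hb : 0 ≤ b) (ht : 1 ≤ t) :
    (a + b) ^ t ≤ 2 ^ (t - 1) * (a ^ t + b ^ t) := by
  lift a to NNReal using ha
  lift b to NNReal using hb
  exact_mod_cast NNReal.rpow_add_le_mul_rpow_add_rpow a b ht

lemma Real.le_one_add_rpow {a q : ℝ} (ha : 0 ≤ a) (hq : 1 ≤ q) : a ≤ 1 + a ^ q := by
  rcases le_total a 1 with h | h
  · linarith [Real.rpow_nonneg ha q]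
  · linarith [Real.self_le_rpow_of_one_le h hq]

lemma rpow_norm_add_le {E : Type*} [SeminormedAddCommGroup E] {t β : ℝ} (ht : 1 ≤ t)
    (htβ : t ≤ β) (x y : E) : ‖x + y‖ ^ t ≤ 2 ^ β * ((1 + ‖x‖) ^ β + ‖y‖ ^ t) := by
  have hx : ‖x‖ ^ t ≤ (1 + ‖x‖) ^ β := calc
    ‖x‖ ^ t ≤ (1 + ‖x‖) ^ t := by gcongr; linarith
    _ ≤ (1 + ‖x‖) ^ β := Real.rpow_le_rpow_of_exponent_le (by linarith [norm_nonneg x]) htβ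
  calc ‖x + y‖ ^ t ≤ (‖x‖ + ‖y‖) ^ t := by gcongr; exact norm_add_le x y
    _ ≤ 2 ^ (t - 1) * (‖x‖ ^ t + ‖y‖ ^ t) :=
      Real.rpow_add_le_mul_rpow_add_rpow (norm_nonneg x) (norm_nonneg y) ht
    _ ≤ 2 ^ β * ((1 + ‖x‖) ^ β + ‖y‖ ^ t) := by
      gcongr
      · norm_num
      · linarith

lemma abs_inner_le_rpow_add_rpow {E : Type*} [NormedAddCommGroup E] [InnerProductSpace ℝ E]
    {p q : ℝ} (hpq : p.HolderConjugate q) (x y : E) : |⟪x, y⟫| ≤ ‖x‖ ^ p + ‖y‖ ^ q := calc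
  |⟪x, y⟫| ≤ ‖x‖ * ‖y‖ := abs_real_inner_le_norm x y
  _ ≤ ‖x‖ ^ p / p + ‖y‖ ^ q / q :=
    Real.young_inequality_of_nonneg (norm_nonneg x) (norm_nonneg y) hpq
  _ ≤ ‖x‖ ^ p + ‖y‖ ^ q := by
    gcongr
    · exact div_le_self (by positivity) hpq.lt.le
    · exact div_le_self (by positivity) hpq.symm.lt.le

lemma exists_rpow_norm_comp_add_le {Ω E F : Type*} [SeminormedAddCommGroup E]
    [SeminormedAddCommGroup F] {A : Ω → E → F} {p q : Ω → ℝ} {c β : ℝ} (hp : ∀ ω, 1 ≤ p ω)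
    (hpβ : ∀ ω, p ω ≤ β) (hc : 0 ≤ c) (hA : ∀ ω ξ, ‖A ω ξ‖ ^ q ω ≤ c * ‖ξ‖ ^ p ω + c) (ξ : E) :
    ∃ C, ∀ ω x, ‖A ω (ξ + x)‖ ^ q ω ≤ C * (1 + ‖x‖ ^ p ω) := by
  refine ⟨c * (2 ^ β * ((1 + ‖ξ‖) ^ β + 1) + 1), fun ω x => ?_⟩
  have hK : 0 ≤ (2 : ℝ) ^ β * (1 + ‖ξ‖) ^ β := by positivity
  have hx : 0 ≤ ‖x‖ ^ p ω := by positivity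
  calc ‖A ω (ξ + x)‖ ^ q ω ≤ c * ‖ξ + x‖ ^ p ω + c := hA ω _
    _ ≤ c * (2 ^ β * ((1 + ‖ξ‖) ^ β + ‖x‖ ^ p ω)) + c := by
      gcongr; exact rpow_norm_add_le (hp ω) (hpβ ω) ξ x
    _ ≤ c * (2 ^ β * ((1 + ‖ξ‖) ^ β + 1) + 1) * (1 + ‖x‖ ^ p ω) := by
      have hB : (0 : ℝ) ≤ 2 ^ β := by positivity
      nlinarith [mul_nonneg hc hB, mul_nonneg (mul_nonneg hc hK) hx, mul_nonneg hc hx]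

lemma measurable_comp_of_continuous_of_measurable {Ω E F : Type*} [MeasurableSpace Ω]
    [TopologicalSpace E] [TopologicalSpace.MetrizableSpace E]
    [MeasurableSpace E] [SecondCountableTopology E] [OpensMeasurableSpace E]
    [TopologicalSpace F] [TopologicalSpace.PseudoMetrizableSpace F] [MeasurableSpace F]
    [BorelSpace F]
    {A : Ω → E → F} (hcont : ∀ ω, Continuous (A ω)) (hmeas : ∀ x, Measurable fun ω => A ω x)
    {u : Ω → E} (hu : Measurable u) : Measurable fun ω => A ω (u ω) :=
  (measurable_uncurry_of_continuous_of_measurable hcont hmeas).comp (hu.prodMk measurable_id)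

section Integrability

variable {Ω E : Type*} [MeasurableSpace Ω] {μ : Measure Ω}

lemma integrable_rpow_norm_of_lintegral_lt_top [NormedAddCommGroup E] [MeasurableSpace E]
    [OpensMeasurableSpace E] {w : Ω → E} {p : Ω → ℝ} (hw : Measurable w) (hp : Measurable p)
    (hfin : ∫⁻ ω, ENNReal.ofReal (‖w ω‖ ^ p ω) ∂μ < ⊤) :
    Integrable (fun ω => ‖w ω‖ ^ p ω) μ := by
  refine ⟨(hw.norm.pow hp).aestronglyMeasurable, ?_⟩
  rwa [hasFiniteIntegral_iff_ofReal (ae_of_all _ fun ω => by positivity)]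

lemma integrable_of_rpow_norm_le [IsFiniteMeasure μ] [NormedAddCommGroup E] {f : Ω → E}
    {q g : Ω → ℝ} (hf : AEStronglyMeasurable f μ) (hq : ∀ ω, 1 ≤ q ω) (hg : Integrable g μ)
    (hfg : ∀ ω, ‖f ω‖ ^ q ω ≤ g ω) : Integrable f μ :=
  ((integrable_const 1).add hg).mono' hf <| ae_of_all _ fun ω =>
    (Real.le_one_add_rpow (norm_nonneg _) (hq ω)).trans (by simpa using hfg ω)

lemma integrable_inner_of_rpow_norm_le [NormedAddCommGroup E] [InnerProductSpace ℝ E]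
    {f g : Ω → E} {p q F G : Ω → ℝ} (hpq : ∀ ω, (p ω).HolderConjugate (q ω))
    (hf : AEStronglyMeasurable f μ) (hg : AEStronglyMeasurable g μ)
    (hF : Integrable F μ) (hG : Integrable G μ)
    (hfF : ∀ ω, ‖f ω‖ ^ p ω ≤ F ω) (hgG : ∀ ω, ‖g ω‖ ^ q ω ≤ G ω) :
    Integrable (fun ω => ⟪f ω, g ω⟫) μ :=
  (hF.add hG).mono' (hf.inner hg) <| ae_of_all _ fun ω =>
    (abs_inner_le_rpow_add_rpow (hpq ω) (f ω) (g ω)).trans (add_le_add (hfF ω) (hgG ω))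

end Integrability

section Monotonicity

variable {Ω E : Type*} [MeasurableSpace Ω] {μ : Measure Ω} [IsProbabilityMeasure μ]
  [NormedAddCommGroup E] [InnerProductSpace ℝ E] [CompleteSpace E]

lemma integral_pos_of_pos_of_ne {g : Ω → ℝ} {u : Ω → E} {c : E} (hg0 : 0 ≤ g)
    (hg : Integrable g μ) (hpos : ∀ ω, u ω ≠ c → 0 < g ω) (hu : ∫ ω, u ω ∂μ ≠ c) :
    0 < ∫ ω, g ω ∂μ := by
  rw [integral_pos_iff_support_of_nonneg hg0 hg, pos_iff_ne_zero]
  intro hnull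
  have hae : u =ᵐ[μ] fun _ => c := by
    refine measure_mono_null (fun ω hω => ?_) hnull
    exact (hpos ω hω).ne'
  exact hu (by simp [integral_congr_ae hae])

theorem inner_integral_sub_integral_pos {A : Ω → E → E}
    (hA : ∀ ω x y, x ≠ y → 0 < ⟪A ω x - A ω y, x - y⟫) {ξ₁ ξ₂ : E} (hne : ξ₁ ≠ ξ₂)
    {v₁ v₂ : Ω → E} (hB₁ : Integrable (fun ω => A ω (ξ₁ + v₁ ω)) μ)
    (hB₂ : Integrable (fun ω => A ω (ξ₂ + v₂ ω)) μ)
    (hB₁w : Integrable (fun ω => ⟪A ω (ξ₁ + v₁ ω), v₁ ω - v₂ ω⟫) μ)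
    (hB₂w : Integrable (fun ω => ⟪A ω (ξ₂ + v₂ ω), v₁ ω - v₂ ω⟫) μ)
    (hsol₁ : ∫ ω, ⟪A ω (ξ₁ + v₁ ω), v₁ ω - v₂ ω⟫ ∂μ = 0)
    (hsol₂ : ∫ ω, ⟪A ω (ξ₂ + v₂ ω), v₁ ω - v₂ ω⟫ ∂μ = 0)
    (hmean : ∫ ω, (v₁ ω - v₂ ω) ∂μ = 0) :
    0 < ⟪(∫ ω, A ω (ξ₁ + v₁ ω) ∂μ) - ∫ ω, A ω (ξ₂ + v₂ ω) ∂μ, ξ₁ - ξ₂⟫ := by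
  set B₁ := fun ω => A ω (ξ₁ + v₁ ω)
  set B₂ := fun ω => A ω (ξ₂ + v₂ ω)
  set g := fun ω => ⟪B₁ ω - B₂ ω, (ξ₁ + v₁ ω) - (ξ₂ + v₂ ω)⟫
  have hg_eq : g = fun ω => (⟪ξ₁ - ξ₂, B₁ ω⟫ - ⟪ξ₁ - ξ₂, B₂ ω⟫) +
      (⟪B₁ ω, v₁ ω - v₂ ω⟫ - ⟪B₂ ω, v₁ ω - v₂ ω⟫) := by
    ext ω
    have : (ξ₁ + v₁ ω) - (ξ₂ + v₂ ω) = (ξ₁ - ξ₂) + (v₁ ω - v₂ ω) := by abel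
    simp only [g, this, inner_add_right, inner_sub_left, real_inner_comm (ξ₁ - ξ₂)]
    ring
  have hI : Integrable (fun ω => ⟪ξ₁ - ξ₂, B₁ ω⟫ - ⟪ξ₁ - ξ₂, B₂ ω⟫) μ :=
    (hB₁.const_inner _).sub (hB₂.const_inner _)
  have hJ : Integrable (fun ω => ⟪B₁ ω, v₁ ω - v₂ ω⟫ - ⟪B₂ ω, v₁ ω - v₂ ω⟫) μ := hB₁w.sub hB₂w
  have hg_integral : ∫ ω, g ω ∂μ = ⟪(∫ ω, B₁ ω ∂μ) - ∫ ω, B₂ ω ∂μ, ξ₁ - ξ₂⟫ := by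
    simp only [hg_eq]
    rw [integral_add hI hJ, integral_sub (hB₁.const_inner _) (hB₂.const_inner _),
      integral_sub hB₁w hB₂w, integral_inner hB₁, integral_inner hB₂, hsol₁, hsol₂,
      ← inner_sub_right, real_inner_comm, sub_self, add_zero]
  have hg_nonneg : 0 ≤ g := fun ω => by
    by_cases h : ξ₁ + v₁ ω = ξ₂ + v₂ ω
    · simp [g, B₁, B₂, h]
    · exact (hA ω _ _ h).le
  rw [← hg_integral]
  refine integral_pos_of_pos_of_ne (u := fun ω => v₁ ω - v₂ ω) (c := ξ₂ - ξ₁) hg_nonneg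
    (hg_eq ▸ hI.add hJ) (fun ω hω => hA ω _ _ fun h => hω ?_)
    (by rw [hmean, ne_comm, sub_ne_zero]; exact hne.symm)
  rw [sub_eq_sub_iff_add_eq_add, add_comm, h]

end Monotonicity

theorem stmt13_general
    {d : ℕ}
    {Ω : Type*} [MeasurableSpace Ω] (P : Measure Ω) [IsProbabilityMeasure P]
    (p : Ω → ℝ) (hp : Measurable p)
    (α β : ℝ) (hα : 1 < α) (hαp : ∀ ω, α ≤ p ω) (hpβ : ∀ ω, p ω ≤ β)
    (A : Ω → Md d → Md d)
    (hAmeas : ∀ ξ : Md d, Measurable (fun ω => A ω ξ))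
    (hAcont : ∀ ω, Continuous (A ω))
    (hAmono : ∀ ω (ξ₁ ξ₂ : Md d), ξ₁ ≠ ξ₂ → 0 < ⟪A ω ξ₁ - A ω ξ₂, ξ₁ - ξ₂⟫)
    (c₁ : ℝ) (hc₁ : 0 < c₁)
    (hAgrowth : ∀ ω (ξ : Md d), ‖A ω ξ‖ ^ (p ω / (p ω - 1)) ≤ c₁ * ‖ξ‖ ^ p ω + c₁)
    -- `S` is a linear subspace of the measurable functions `Ω → M` with finite
    -- `p(⬝)`-integral and zero mean:
    (S : Set (Ω → Md d))
    (hSmeas : ∀ w ∈ S, Measurable w)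
    (hSfin : ∀ w ∈ S, ∫⁻ ω, ENNReal.ofReal (‖w ω‖ ^ p ω) ∂P < ⊤)
    (hSadd : ∀ w₁ ∈ S, ∀ w₂ ∈ S, w₁ + w₂ ∈ S)
    (hSsmul : ∀ (r : ℝ), ∀ w ∈ S, r • w ∈ S)
    (hSmean : ∀ w ∈ S, ∫ ω, w ω ∂P = 0)
    (ξ₁ ξ₂ : Md d) (hne : ξ₁ ≠ ξ₂)
    (v₁ v₂ : Ω → Md d) (hv₁ : v₁ ∈ S) (hv₂ : v₂ ∈ S)
    (hsol₁ : ∀ θ ∈ S, ∫ ω, ⟪A ω (ξ₁ + v₁ ω), θ ω⟫ ∂P = 0)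
    (hsol₂ : ∀ θ ∈ S, ∫ ω, ⟪A ω (ξ₂ + v₂ ω), θ ω⟫ ∂P = 0) :
    0 < ⟪(∫ ω, A ω (ξ₁ + v₁ ω) ∂P) - ∫ ω, A ω (ξ₂ + v₂ ω) ∂P, ξ₁ - ξ₂⟫ := by
  have hconj : ∀ ω, (p ω / (p ω - 1)).HolderConjugate (p ω) := fun ω =>
    (Real.HolderConjugate.conjExponent (hα.trans_le (hαp ω))).symm
  have hS_int : ∀ w ∈ S, Integrable (fun ω => ‖w ω‖ ^ p ω) P := fun w hw =>
    integrable_rpow_norm_of_lintegral_lt_top (hSmeas w hw) hp (hSfin w hw)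
  have hw : v₁ - v₂ ∈ S := by
    simpa [sub_eq_add_neg] using hSadd v₁ hv₁ _ (hSsmul (-1) v₂ hv₂)
  have hB_meas : ∀ ξ, ∀ v ∈ S, AEStronglyMeasurable (fun ω => A ω (ξ + v ω)) P := fun ξ v hv =>
    (measurable_comp_of_continuous_of_measurable hAcont hAmeas
      (measurable_const.add (hSmeas v hv))).aestronglyMeasurable
  have hB_bound : ∀ ξ, ∀ v ∈ S, ∃ F, Integrable F P ∧
      ∀ ω, ‖A ω (ξ + v ω)‖ ^ (p ω / (p ω - 1)) ≤ F ω := fun ξ v hv => by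
    obtain ⟨C, hC⟩ := exists_rpow_norm_comp_add_le (fun ω => (hconj ω).symm.lt.le) hpβ
      hc₁.le hAgrowth ξ
    exact ⟨_, ((integrable_const 1).add (hS_int v hv)).const_mul C, fun ω => hC ω (v ω)⟩
  obtain ⟨F₁, hF₁, hF₁_le⟩ := hB_bound ξ₁ v₁ hv₁
  obtain ⟨F₂, hF₂, hF₂_le⟩ := hB_bound ξ₂ v₂ hv₂
  have hw_meas : AEStronglyMeasurable (v₁ - v₂) P := (hSmeas _ hw).aestronglyMeasurable
  exact inner_integral_sub_integral_pos hAmono hne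
    (integrable_of_rpow_norm_le (hB_meas ξ₁ v₁ hv₁) (fun ω => (hconj ω).lt.le) hF₁ hF₁_le)
    (integrable_of_rpow_norm_le (hB_meas ξ₂ v₂ hv₂) (fun ω => (hconj ω).lt.le) hF₂ hF₂_le)
    (integrable_inner_of_rpow_norm_le hconj (hB_meas ξ₁ v₁ hv₁) hw_meas hF₁ (hS_int _ hw)
      hF₁_le fun _ => le_rfl)
    (integrable_inner_of_rpow_norm_le hconj (hB_meas ξ₂ v₂ hv₂) hw_meas hF₂ (hS_int _ hw)
      hF₂_le fun _ => le_rfl)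
    (hsol₁ _ hw) (hsol₂ _ hw) (hSmean _ hw)

/-- strict monotonicity of the effective tensor, Lemma `l_eff-tenz`:
if `ξ₁ ≠ ξ₂` and `v_{ξ₁}, v_{ξ₂} ∈ S` solve the corresponding cell problems, then
`(A^eff(ξ₁) − A^eff(ξ₂))·(ξ₁ − ξ₂) > 0`. -/
theorem stmt13
    {d : ℕ} (hd : 1 ≤ d)
    {Ω : Type*} [MeasurableSpace Ω] (P : Measure Ω) [IsProbabilityMeasure P]
    (p : Ω → ℝ) (hp : Measurable p)
    (α β : ℝ) (hα : 1 < α) (hαp : ∀ ω, α ≤ p ω) (hpβ : ∀ ω, p ω ≤ β)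
    (A : Ω → Md d → Md d)
    (hAmeas : ∀ ξ : Md d, Measurable (fun ω => A ω ξ))
    (hAcont : ∀ ω, Continuous (A ω))
    (hAmono : ∀ ω (ξ₁ ξ₂ : Md d), ξ₁ ≠ ξ₂ → 0 < ⟪A ω ξ₁ - A ω ξ₂, ξ₁ - ξ₂⟫)
    (c₁ : ℝ) (hc₁ : 0 < c₁)
    (hAgrowth : ∀ ω (ξ : Md d), ‖A ω ξ‖ ^ (p ω / (p ω - 1)) ≤ c₁ * ‖ξ‖ ^ p ω + c₁)
    -- `S` is a linear subspace of the measurable functions `Ω → M` with finite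
    -- `p(⬝)`-integral and zero mean:
    (S : Set (Ω → Md d))
    (hSmeas : ∀ w ∈ S, Measurable w)
    (hSfin : ∀ w ∈ S, ∫⁻ ω, ENNReal.ofReal (‖w ω‖ ^ p ω) ∂P < ⊤)
    (hSzero : (0 : Ω → Md d) ∈ S)
    (hSadd : ∀ w₁ ∈ S, ∀ w₂ ∈ S, w₁ + w₂ ∈ S)
    (hSsmul : ∀ (r : ℝ), ∀ w ∈ S, r • w ∈ S)
    (hSmean : ∀ w ∈ S, ∫ ω, w ω ∂P = 0)
    (ξ₁ ξ₂ : Md d) (hne : ξ₁ ≠ ξ₂)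
    (v₁ v₂ : Ω → Md d) (hv₁ : v₁ ∈ S) (hv₂ : v₂ ∈ S)
    (hsol₁ : ∀ θ ∈ S, ∫ ω, ⟪A ω (ξ₁ + v₁ ω), θ ω⟫ ∂P = 0)
    (hsol₂ : ∀ θ ∈ S, ∫ ω, ⟪A ω (ξ₂ + v₂ ω), θ ω⟫ ∂P = 0) :
    0 < ⟪(∫ ω, A ω (ξ₁ + v₁ ω) ∂P) - ∫ ω, A ω (ξ₂ + v₂ ω) ∂P, ξ₁ - ξ₂⟫ :=
  stmt13_general P p hp α β hα hαp hpβ A hAmeas hAcont hAmono c₁ hc₁ hAgrowth S hSmeas hSfin hSadd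
    hSsmul hSmean ξ₁ ξ₂ hne v₁ v₂ hv₁ hv₂ hsol₁ hsol₂
end

section
/- (Identification of weak limits of cell-problem solutions.) Let ξ_j → ξ in M, and for each j let v_{ξ_j} ∈ S solve the cell problem for ξ_j. Assume sup_j ∫_Ω |v_{ξ_j}(ω)|^{p(ω)} dP(ω) < ∞, and assume there is η ∈ S such that ∫_Ω v_{ξ_j}(ω)·θ(ω) dP(ω) → ∫_Ω η(ω)·θ(ω) dP(ω) for every measurable θ : Ω → M with ∫_Ω |θ(ω)|^{p'(ω)} dP(ω) < ∞. Then η solves the cell problem for ξ: ∫_Ω A(ω, ξ + η(ω))·θ(ω) dP(ω) = 0 for every θ ∈ S. In particular η coincides P-almost surely with the unique solution v_ξ of the cell problem for ξ. -/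
/-!
Minty's trick. For `w ∈ S`, monotonicity of `A` tested against `(ξⱼ + vⱼ) - (ξ + w)` gives,
once the cell equation for `vⱼ` removes `∫ A(ξⱼ + vⱼ)·(vⱼ - w)`, an inequality all of whose
terms pass to the limit: by the growth condition and the uniform modular bound on the `vⱼ`, the
means `∫ A(ξⱼ + vⱼ)` stay bounded, so their pairing with `ξⱼ - ξ` vanishes, and `A(ξ + w)` lies
in `L^{p'(·)}`, hence is an admissible test function for the weak convergence `vⱼ ⇀ η`. The
limit is `∫ A(ξ + w)·(w - η) ≥ 0` for every `w ∈ S`. Taking `w = η + tθ`, dividing by `t > 0`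
and letting `t → 0` (dominated convergence, using the growth bound again) gives
`∫ A(ξ + η)·θ ≥ 0` for all `θ ∈ S`, hence `= 0` since `S` is symmetric. Uniqueness follows
from strict monotonicity.
-/

open MeasureTheory ENNReal NNReal
open scoped RealInnerProductSpace NNReal

open Filter Topology

namespace Real

lemma rpow_le_max_one_rpow_s15 {a s β : ℝ} (ha : 0 ≤ a) (hs : 0 ≤ s) (hsβ : s ≤ β) :
    a ^ s ≤ max 1 a ^ β :=
  (rpow_le_rpow ha (le_max_right 1 a) hs).trans
    (rpow_le_rpow_of_exponent_le (le_max_left 1 a) hsβ)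

lemma add_rpow_le_two_rpow_mul {a b s β : ℝ} (ha : 0 ≤ a) (hb : 0 ≤ b) (hs : 0 ≤ s)
    (hsβ : s ≤ β) : (a + b) ^ s ≤ 2 ^ β * (a ^ s + b ^ s) := by
  have hm : 0 ≤ max a b := ha.trans (le_max_left a b)
  have hmax : max a b ^ s ≤ a ^ s + b ^ s := by
    rcases max_choice a b with h | h <;> rw [h] <;> linarith [rpow_nonneg ha s, rpow_nonneg hb s]
  calc (a + b) ^ s ≤ (2 * max a b) ^ s :=
        rpow_le_rpow (add_nonneg ha hb) (by linarith [le_max_left a b, le_max_right a b]) hs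
    _ = 2 ^ s * max a b ^ s := mul_rpow zero_le_two hm
    _ ≤ 2 ^ β * (a ^ s + b ^ s) :=
        mul_le_mul (rpow_le_rpow_of_exponent_le one_le_two hsβ) hmax (rpow_nonneg hm s)
          (by positivity)

lemma le_one_add_rpow_s15 {a s : ℝ} (ha : 0 ≤ a) (hs : 1 ≤ s) : a ≤ 1 + a ^ s := by
  rcases le_total a 1 with h | h
  · linarith [rpow_nonneg ha s]
  · linarith [self_le_rpow_of_one_le h hs]

end Real

lemma norm_add_rpow_le {E : Type*} [SeminormedAddCommGroup E] {s β : ℝ} (hs : 0 ≤ s)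
    (hsβ : s ≤ β) (x y : E) :
    ‖x + y‖ ^ s ≤ 2 ^ β * (‖x‖ ^ s + ‖y‖ ^ s) :=
  (Real.rpow_le_rpow (norm_nonneg _) (norm_add_le x y) hs).trans
    (Real.add_rpow_le_two_rpow_mul (norm_nonneg x) (norm_nonneg y) hs hsβ)

section InnerProductSpace

variable {E : Type*} [NormedAddCommGroup E] [InnerProductSpace ℝ E]

lemma abs_real_inner_le_rpow_conjExponent_add_rpow_s15 {s : ℝ} (hs : 1 < s) (x y : E) :
    |⟪x, y⟫| ≤ ‖x‖ ^ (s / (s - 1)) + ‖y‖ ^ s := by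
  have hconj : (s / (s - 1)).HolderConjugate s := (Real.HolderConjugate.conjExponent hs).symm
  calc |⟪x, y⟫| ≤ ‖x‖ * ‖y‖ := abs_real_inner_le_norm x y
    _ ≤ ‖x‖ ^ (s / (s - 1)) / (s / (s - 1)) + ‖y‖ ^ s / s :=
        Real.young_inequality_of_nonneg (norm_nonneg x) (norm_nonneg y) hconj
    _ ≤ ‖x‖ ^ (s / (s - 1)) + ‖y‖ ^ s :=
        add_le_add (div_le_self (by positivity) hconj.lt.le) (div_le_self (by positivity) hs.le)

lemma integral_inner_const_add [CompleteSpace E] {Ω : Type*} [MeasurableSpace Ω]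
    {P : Measure Ω} {F h : Ω → E} (hF : Integrable F P)
    (hFh : Integrable (fun ω => ⟪F ω, h ω⟫) P) (c : E) :
    ∫ ω, ⟪F ω, c + h ω⟫ ∂P = ⟪∫ ω, F ω ∂P, c⟫ + ∫ ω, ⟪F ω, h ω⟫ ∂P := by
  simp_rw [inner_add_right]
  rw [integral_add (hF.inner_const c) hFh, real_inner_comm, ← integral_inner hF]
  simp_rw [real_inner_comm c]

end InnerProductSpace

lemma integral_rpow_le_max_one_rpow {Ω : Type*} [MeasurableSpace Ω] {P : Measure Ω}
    [IsProbabilityMeasure P] {p : Ω → ℝ} {β a : ℝ} (ha : 0 ≤ a) (hp0 : ∀ ω, 0 ≤ p ω)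
    (hpβ : ∀ ω, p ω ≤ β) : ∫ ω, a ^ p ω ∂P ≤ max 1 a ^ β :=
  (integral_mono_of_nonneg (ae_of_all _ fun ω => Real.rpow_nonneg ha _) (integrable_const _)
    (ae_of_all _ fun ω => Real.rpow_le_max_one_rpow_s15 ha (hp0 ω) (hpβ ω))).trans_eq (by simp)

section VariableExponent

variable {Ω E : Type*} [MeasurableSpace Ω] {P : Measure Ω} {p : Ω → ℝ} {β : ℝ}
  [NormedAddCommGroup E] [MeasurableSpace E] {A : Ω → E → E} {c : ℝ}

/-- For bounded `p`, membership in the variable exponent Lebesgue space `L^{p(·)}`. -/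
def MemLpVar (g : Ω → E) (p : Ω → ℝ) (P : Measure Ω) : Prop :=
  Measurable g ∧ Integrable (fun ω => ‖g ω‖ ^ p ω) P

structure IsCaratheodoryGrowth (A : Ω → E → E) (p : Ω → ℝ) (c : ℝ) : Prop where
  measurable_apply : ∀ x, Measurable fun ω => A ω x
  continuous : ∀ ω, Continuous (A ω)
  growth : ∀ ω x, ‖A ω x‖ ^ (p ω / (p ω - 1)) ≤ c * ‖x‖ ^ p ω + c

lemma IsCaratheodoryGrowth.norm_le (hA : IsCaratheodoryGrowth A p c) {ω : Ω} (hp1 : 1 < p ω)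
    (x : E) :
    ‖A ω x‖ ≤ 1 + (c * ‖x‖ ^ p ω + c) := by
  have hq : 1 ≤ p ω / (p ω - 1) := (Real.HolderConjugate.conjExponent hp1).symm.lt.le
  exact (Real.le_one_add_rpow_s15 (norm_nonneg _) hq).trans (by linarith [hA.growth ω x])

lemma IsCaratheodoryGrowth.abs_inner_le [InnerProductSpace ℝ E] (hA : IsCaratheodoryGrowth A p c)
    {ω : Ω} (hp1 : 1 < p ω) (x y : E) :
    |⟪A ω x, y⟫| ≤ c * ‖x‖ ^ p ω + c + ‖y‖ ^ p ω :=
  (abs_real_inner_le_rpow_conjExponent_add_rpow_s15 hp1 _ _).trans (by linarith [hA.growth ω x])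

variable [BorelSpace E]

lemma memLpVar_of_lintegral_lt_top (hp : Measurable p) {g : Ω → E} (hg : Measurable g)
    (hfin : ∫⁻ ω, ENNReal.ofReal (‖g ω‖ ^ p ω) ∂P < ⊤) : MemLpVar g p P := by
  refine ⟨hg, (hg.norm.pow hp).aestronglyMeasurable, ?_⟩
  rwa [hasFiniteIntegral_iff_ofReal (ae_of_all _ fun ω => Real.rpow_nonneg (norm_nonneg _) _)]

lemma memLpVar_const [IsFiniteMeasure P] (hp : Measurable p) (hp0 : ∀ ω, 0 ≤ p ω)
    (hpβ : ∀ ω, p ω ≤ β) (x : E) : MemLpVar (fun _ => x) p P := by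
  refine ⟨measurable_const, (integrable_const (max 1 ‖x‖ ^ β)).mono'
    (measurable_const.norm.pow hp).aestronglyMeasurable (ae_of_all _ fun ω => ?_)⟩
  rw [Real.norm_of_nonneg (Real.rpow_nonneg (norm_nonneg x) _)]
  exact Real.rpow_le_max_one_rpow_s15 (norm_nonneg x) (hp0 ω) (hpβ ω)

variable [SecondCountableTopology E]

lemma MemLpVar.add (hp : Measurable p) (hp0 : ∀ ω, 0 ≤ p ω) (hpβ : ∀ ω, p ω ≤ β)
    {f g : Ω → E} (hf : MemLpVar f p P) (hg : MemLpVar g p P) : MemLpVar (f + g) p P := by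
  refine ⟨hf.1.add hg.1, ((hf.2.add hg.2).const_mul (2 ^ β)).mono'
    ((hf.1.add hg.1).norm.pow hp).aestronglyMeasurable (ae_of_all _ fun ω => ?_)⟩
  rw [Real.norm_of_nonneg (Real.rpow_nonneg (norm_nonneg _) _)]
  exact norm_add_rpow_le (hp0 ω) (hpβ ω) (f ω) (g ω)

lemma MemLpVar.integral_add_le (hp : Measurable p) (hp0 : ∀ ω, 0 ≤ p ω) (hpβ : ∀ ω, p ω ≤ β)
    {f g : Ω → E} (hf : MemLpVar f p P) (hg : MemLpVar g p P) :
    ∫ ω, ‖f ω + g ω‖ ^ p ω ∂P ≤ 2 ^ β * (∫ ω, ‖f ω‖ ^ p ω ∂P + ∫ ω, ‖g ω‖ ^ p ω ∂P) := by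
  rw [← integral_add hf.2 hg.2, ← integral_const_mul]
  exact integral_mono (hf.add hp hp0 hpβ hg).2 ((hf.2.add hg.2).const_mul _)
    fun ω => norm_add_rpow_le (hp0 ω) (hpβ ω) (f ω) (g ω)

lemma MemLpVar.const_add [IsFiniteMeasure P] (hp : Measurable p) (hp0 : ∀ ω, 0 ≤ p ω)
    (hpβ : ∀ ω, p ω ≤ β) {g : Ω → E} (hg : MemLpVar g p P) (x : E) :
    MemLpVar (fun ω => x + g ω) p P :=
  (memLpVar_const hp hp0 hpβ x).add hp hp0 hpβ hg

lemma IsCaratheodoryGrowth.measurable_comp (hA : IsCaratheodoryGrowth A p c) {g : Ω → E}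
    (hg : Measurable g) :
    Measurable fun ω => A ω (g ω) :=
  (measurable_uncurry_of_continuous_of_measurable (u := fun x ω => A ω x) hA.continuous
    hA.measurable_apply).comp (hg.prodMk measurable_id)

lemma IsCaratheodoryGrowth.integrable_comp [IsFiniteMeasure P] (hA : IsCaratheodoryGrowth A p c)
    (hp1 : ∀ ω, 1 < p ω) {g : Ω → E} (hg : MemLpVar g p P) :
    Integrable (fun ω => A ω (g ω)) P :=
  ((integrable_const 1).add ((hg.2.const_mul c).add (integrable_const c))).mono'
    (hA.measurable_comp hg.1).aestronglyMeasurable (ae_of_all _ fun ω => hA.norm_le (hp1 ω) _)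

lemma IsCaratheodoryGrowth.lintegral_rpow_conjExponent_comp_lt_top [IsFiniteMeasure P]
    (hA : IsCaratheodoryGrowth A p c) (hp : Measurable p) {g : Ω → E} (hg : MemLpVar g p P) :
    ∫⁻ ω, ENNReal.ofReal (‖A ω (g ω)‖ ^ (p ω / (p ω - 1))) ∂P < ⊤ := by
  refine (((hg.2.const_mul c).add (integrable_const c)).mono'
    ((hA.measurable_comp hg.1).norm.pow (hp.div (hp.sub_const 1))).aestronglyMeasurable
    (ae_of_all _ fun ω => ?_)).lintegral_lt_top
  rw [Real.norm_of_nonneg (Real.rpow_nonneg (norm_nonneg _) _)]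
  exact hA.growth ω (g ω)

lemma IsCaratheodoryGrowth.integral_norm_comp_le [IsProbabilityMeasure P]
    (hA : IsCaratheodoryGrowth A p c) (hp1 : ∀ ω, 1 < p ω) {g : Ω → E} (hg : MemLpVar g p P) :
    ∫ ω, ‖A ω (g ω)‖ ∂P ≤ 1 + (c * ∫ ω, ‖g ω‖ ^ p ω ∂P + c) := by
  have hint : Integrable (fun ω => c * ‖g ω‖ ^ p ω + c) P :=
    (hg.2.const_mul c).add (integrable_const c)
  calc ∫ ω, ‖A ω (g ω)‖ ∂P ≤ ∫ ω, (1 + (c * ‖g ω‖ ^ p ω + c)) ∂P :=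
        integral_mono (hA.integrable_comp hp1 hg).norm ((integrable_const 1).add hint)
          fun ω => hA.norm_le (hp1 ω) _
    _ = 1 + (c * ∫ ω, ‖g ω‖ ^ p ω ∂P + c) := by
        rw [integral_add (integrable_const 1) hint, integral_add (hg.2.const_mul c)
          (integrable_const c), integral_const_mul]
        simp

variable [InnerProductSpace ℝ E]

lemma IsCaratheodoryGrowth.integrable_inner_comp [IsFiniteMeasure P]
    (hA : IsCaratheodoryGrowth A p c) (hp1 : ∀ ω, 1 < p ω) {g h : Ω → E} (hg : MemLpVar g p P)
    (hh : MemLpVar h p P) :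
    Integrable (fun ω => ⟪A ω (g ω), h ω⟫) P :=
  (((hg.2.const_mul c).add (integrable_const c)).add hh.2).mono'
    ((hA.measurable_comp hg.1).inner hh.1).aestronglyMeasurable
    (ae_of_all _ fun ω => (Real.norm_eq_abs _).trans_le (hA.abs_inner_le (hp1 ω) _ _))

lemma IsCaratheodoryGrowth.tendsto_integral_inner_comp_add_smul [IsFiniteMeasure P]
    (hA : IsCaratheodoryGrowth A p c) (hc : 0 ≤ c) (hp1 : ∀ ω, 1 < p ω) (hpβ : ∀ ω, p ω ≤ β)
    {g h : Ω → E} (hg : MemLpVar g p P) (hh : MemLpVar h p P) :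
    Tendsto (fun t : ℝ => ∫ ω, ⟪A ω (g ω + t • h ω), h ω⟫ ∂P) (𝓝 0)
      (𝓝 (∫ ω, ⟪A ω (g ω), h ω⟫ ∂P)) := by
  have hp0 : ∀ ω, 0 ≤ p ω := fun ω => zero_le_one.trans (hp1 ω).le
  refine tendsto_integral_filter_of_dominated_convergence
    (fun ω => c * (2 ^ β * (‖g ω‖ ^ p ω + ‖h ω‖ ^ p ω)) + c + ‖h ω‖ ^ p ω)
    (Eventually.of_forall fun t => ((hA.measurable_comp (hg.1.add (hh.1.const_smul t))).inner
      hh.1).aestronglyMeasurable) ?_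
    (((((hg.2.add hh.2).const_mul _).const_mul c).add (integrable_const c)).add hh.2)
    (ae_of_all _ fun ω => ?_)
  · filter_upwards [Metric.closedBall_mem_nhds (0 : ℝ) one_pos] with t ht
    refine ae_of_all _ fun ω => (Real.norm_eq_abs _).trans_le ?_
    have hth : ‖t • h ω‖ ^ p ω ≤ ‖h ω‖ ^ p ω := by
      refine Real.rpow_le_rpow (norm_nonneg _) ?_ (hp0 ω)
      rw [norm_smul]
      exact mul_le_of_le_one_left (norm_nonneg _) (by simpa using ht)
    have hx : ‖g ω + t • h ω‖ ^ p ω ≤ 2 ^ β * (‖g ω‖ ^ p ω + ‖h ω‖ ^ p ω) :=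
      (norm_add_rpow_le (hp0 ω) (hpβ ω) (g ω) (t • h ω)).trans (by gcongr)
    linarith [mul_le_mul_of_nonneg_left hx hc, hA.abs_inner_le (hp1 ω) (g ω + t • h ω) (h ω)]
  · have hline : Tendsto (fun t : ℝ => g ω + t • h ω) (𝓝 0) (𝓝 (g ω)) :=
      (continuous_const.add (continuous_id.smul continuous_const) :
        Continuous fun t : ℝ => g ω + t • h ω).tendsto' 0 (g ω) (by simp)
    exact (((hA.continuous ω).tendsto _).comp hline).inner tendsto_const_nhds

lemma IsCaratheodoryGrowth.tendsto_inner_integral_comp_const_add [IsProbabilityMeasure P]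
    (hA : IsCaratheodoryGrowth A p c) (hc : 0 ≤ c) (hp : Measurable p) (hp1 : ∀ ω, 1 < p ω)
    (hpβ : ∀ ω, p ω ≤ β) {ξs : ℕ → E} {ξ : E} (hξs : Tendsto ξs atTop (𝓝 ξ))
    {vs : ℕ → Ω → E} (hvs : ∀ j, MemLpVar (vs j) p P) {C : ℝ}
    (hC : ∀ j, ∫ ω, ‖vs j ω‖ ^ p ω ∂P ≤ C) :
    Tendsto (fun j => ⟪∫ ω, A ω (ξs j + vs j ω) ∂P, ξs j - ξ⟫) atTop (𝓝 0) := by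
  have hp0 : ∀ ω, 0 ≤ p ω := fun ω => zero_le_one.trans (hp1 ω).le
  set K : E → ℝ := fun x => 1 + (c * (2 ^ β * (max 1 ‖x‖ ^ β + C)) + c)
  have hK : Continuous K := by
    have : Continuous fun x : E => max 1 ‖x‖ ^ β :=
      (continuous_const.max continuous_norm).rpow_const fun x =>
        Or.inl (zero_lt_one.trans_le (le_max_left _ _)).ne'
    fun_prop
  have hbound : ∀ j, ‖∫ ω, A ω (ξs j + vs j ω) ∂P‖ ≤ K (ξs j) := by
    intro j
    have hξj := memLpVar_const (P := P) hp hp0 hpβ (ξs j)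
    have hmod : ∫ ω, ‖ξs j + vs j ω‖ ^ p ω ∂P ≤ 2 ^ β * (max 1 ‖ξs j‖ ^ β + C) :=
      (hξj.integral_add_le hp hp0 hpβ (hvs j)).trans (by
        gcongr
        exacts [integral_rpow_le_max_one_rpow (norm_nonneg _) hp0 hpβ, hC j])
    calc ‖∫ ω, A ω (ξs j + vs j ω) ∂P‖ ≤ ∫ ω, ‖A ω (ξs j + vs j ω)‖ ∂P :=
          norm_integral_le_integral_norm _
      _ ≤ 1 + (c * ∫ ω, ‖ξs j + vs j ω‖ ^ p ω ∂P + c) :=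
          hA.integral_norm_comp_le hp1 ((hvs j).const_add hp hp0 hpβ _)
      _ ≤ K (ξs j) := by dsimp only [K]; gcongr
  have hlim : Tendsto (fun j => ‖ξs j - ξ‖ * K (ξs j)) atTop (𝓝 0) := by
    simpa using (hξs.sub_const ξ).norm.mul ((hK.tendsto ξ).comp hξs)
  refine squeeze_zero_norm (fun j => (norm_inner_le_norm _ _).trans ?_) hlim
  rw [mul_comm]
  exact mul_le_mul_of_nonneg_left (hbound j) (norm_nonneg _)

end VariableExponent

section CellProblem

variable {Ω E : Type*} [MeasurableSpace Ω] {P : Measure Ω} {p : Ω → ℝ} {β c : ℝ}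
  [NormedAddCommGroup E] [InnerProductSpace ℝ E] [MeasurableSpace E] {A : Ω → E → E}

def IsCellSolution (P : Measure Ω) (A : Ω → E → E) (S : Set (Ω → E)) (ξ : E) (v : Ω → E) :
    Prop :=
  ∀ θ ∈ S, ∫ ω, ⟪A ω (ξ + v ω), θ ω⟫ ∂P = 0

/-- Weak convergence in `L^{p(·)}`, tested against `L^{p'(·)}`, `p' = p / (p - 1)`. -/
def TendstoWeaklyLpVar (vs : ℕ → Ω → E) (η : Ω → E) (p : Ω → ℝ) (P : Measure Ω) : Prop :=
  ∀ θ : Ω → E, Measurable θ → ∫⁻ ω, ENNReal.ofReal (‖θ ω‖ ^ (p ω / (p ω - 1))) ∂P < ⊤ →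
    Tendsto (fun j => ∫ ω, ⟪vs j ω, θ ω⟫ ∂P) atTop (𝓝 (∫ ω, ⟪η ω, θ ω⟫ ∂P))

variable [BorelSpace E] [SecondCountableTopology E]

theorem integral_inner_comp_sub_nonneg_of_tendstoWeaklyLpVar [CompleteSpace E]
    [IsProbabilityMeasure P]
    (hA : IsCaratheodoryGrowth A p c) (hc : 0 ≤ c)
    (hAmono : ∀ ω x y, 0 ≤ ⟪A ω x - A ω y, x - y⟫)
    (hp : Measurable p) (hp1 : ∀ ω, 1 < p ω) (hpβ : ∀ ω, p ω ≤ β)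
    {S : Set (Ω → E)} (hS : ∀ w ∈ S, MemLpVar w p P) (hSsub : ∀ u ∈ S, ∀ w ∈ S, u - w ∈ S)
    {ξs : ℕ → E} {ξ : E} (hξs : Tendsto ξs atTop (𝓝 ξ)) {vs : ℕ → Ω → E}
    (hvsS : ∀ j, vs j ∈ S) (hvs : ∀ j, IsCellSolution P A S (ξs j) (vs j)) {C : ℝ}
    (hC : ∀ j, ∫ ω, ‖vs j ω‖ ^ p ω ∂P ≤ C) {η : Ω → E} (hη : MemLpVar η p P)
    (hweak : TendstoWeaklyLpVar vs η p P) {w : Ω → E} (hw : w ∈ S) :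
    0 ≤ ∫ ω, ⟪A ω (ξ + w ω), w ω - η ω⟫ ∂P := by
  have hp0 : ∀ ω, 0 ≤ p ω := fun ω => zero_le_one.trans (hp1 ω).le
  set B : Ω → E := fun ω => A ω (ξ + w ω)
  have hy : MemLpVar (fun ω => ξ + w ω) p P := (hS w hw).const_add hp hp0 hpβ ξ
  have hB : Integrable B P := hA.integrable_comp hp1 hy
  have hBinner : ∀ {h : Ω → E}, MemLpVar h p P → Integrable (fun ω => ⟪B ω, h ω⟫) P :=
    fun hh => hA.integrable_inner_comp hp1 hy hh
  have hsplit : ∀ {h : Ω → E}, MemLpVar h p P →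
      ∫ ω, ⟪B ω, h ω - w ω⟫ ∂P = ∫ ω, ⟪B ω, h ω⟫ ∂P - ∫ ω, ⟪B ω, w ω⟫ ∂P := fun hh => by
    simp_rw [inner_sub_right]
    exact integral_sub (hBinner hh) (hBinner (hS w hw))
  have hstep : ∀ j, ∫ ω, ⟪B ω, vs j ω⟫ ∂P - ∫ ω, ⟪B ω, w ω⟫ ∂P + ⟪∫ ω, B ω ∂P, ξs j - ξ⟫
      ≤ ⟪∫ ω, A ω (ξs j + vs j ω) ∂P, ξs j - ξ⟫ := by
    intro j
    have hx : MemLpVar (fun ω => ξs j + vs j ω) p P := (hS _ (hvsS j)).const_add hp hp0 hpβ _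
    have hd : MemLpVar (fun ω => vs j ω - w ω) p P := hS _ (hSsub _ (hvsS j) _ hw)
    have hd' : MemLpVar (fun ω => (ξs j - ξ) + (vs j ω - w ω)) p P :=
      hd.const_add hp hp0 hpβ _
    have hcell : ∫ ω, ⟪A ω (ξs j + vs j ω), vs j ω - w ω⟫ ∂P = 0 :=
      hvs j _ (hSsub _ (hvsS j) _ hw)
    have hmono : 0 ≤ ∫ ω, ⟪A ω (ξs j + vs j ω) - B ω, (ξs j - ξ) + (vs j ω - w ω)⟫ ∂P :=
      integral_nonneg fun ω => by
        rw [Pi.zero_apply, ← add_sub_add_comm]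
        exact hAmono ω _ _
    simp_rw [inner_sub_left] at hmono
    rw [integral_sub (hA.integrable_inner_comp hp1 hx hd') (hBinner hd'),
      integral_inner_const_add (hA.integrable_comp hp1 hx) (hA.integrable_inner_comp hp1 hx hd),
      integral_inner_const_add hB (hBinner hd), hcell, hsplit (hS _ (hvsS j))] at hmono
    linarith
  have hweakB : Tendsto (fun j => ∫ ω, ⟪B ω, vs j ω⟫ ∂P) atTop (𝓝 (∫ ω, ⟪B ω, η ω⟫ ∂P)) := by
    simpa only [real_inner_comm (B _)] using
      hweak B (hA.measurable_comp hy.1) (hA.lintegral_rpow_conjExponent_comp_lt_top hp hy)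
  have hconstB : Tendsto (fun j => ⟪∫ ω, B ω ∂P, ξs j - ξ⟫) atTop (𝓝 0) := by
    simpa using (tendsto_const_nhds (x := ∫ ω, B ω ∂P)).inner (hξs.sub_const ξ)
  have hlim := le_of_tendsto_of_tendsto' ((hweakB.sub_const _).add hconstB)
    (hA.tendsto_inner_integral_comp_const_add hc hp hp1 hpβ hξs (fun j => hS _ (hvsS j)) hC) hstep
  have hgoal : ∫ ω, ⟪B ω, w ω - η ω⟫ ∂P = ∫ ω, ⟪B ω, w ω⟫ ∂P - ∫ ω, ⟪B ω, η ω⟫ ∂P := by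
    simp_rw [inner_sub_right]
    exact integral_sub (hBinner (hS w hw)) (hBinner hη)
  rw [hgoal]
  linarith

theorem isCellSolution_of_forall_integral_inner_comp_sub_nonneg [IsFiniteMeasure P]
    (hA : IsCaratheodoryGrowth A p c) (hc : 0 ≤ c) (hp : Measurable p) (hp1 : ∀ ω, 1 < p ω)
    (hpβ : ∀ ω, p ω ≤ β) {S : Set (Ω → E)} (hS : ∀ w ∈ S, MemLpVar w p P)
    (hSadd : ∀ u ∈ S, ∀ w ∈ S, u + w ∈ S) (hSsmul : ∀ (r : ℝ), ∀ w ∈ S, r • w ∈ S)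
    {ξ : E} {η : Ω → E} (hη : η ∈ S)
    (hminty : ∀ w ∈ S, 0 ≤ ∫ ω, ⟪A ω (ξ + w ω), w ω - η ω⟫ ∂P) :
    IsCellSolution P A S ξ η := by
  have hp0 : ∀ ω, 0 ≤ p ω := fun ω => zero_le_one.trans (hp1 ω).le
  have hy : MemLpVar (fun ω => ξ + η ω) p P := (hS η hη).const_add hp hp0 hpβ ξ
  have hnonneg : ∀ θ ∈ S, 0 ≤ ∫ ω, ⟪A ω (ξ + η ω), θ ω⟫ ∂P := by
    intro θ hθ
    refine ge_of_tendsto ((hA.tendsto_integral_inner_comp_add_smul hc hp1 hpβ hy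
      (hS θ hθ)).mono_left (nhdsWithin_le_nhds (s := Set.Ioi 0))) ?_
    filter_upwards [self_mem_nhdsWithin] with t (ht : 0 < t)
    have h := hminty _ (hSadd _ hη _ (hSsmul t θ hθ))
    simp only [Pi.add_apply, Pi.smul_apply, add_sub_cancel_left, real_inner_smul_right,
      integral_const_mul, ← add_assoc] at h
    exact (mul_nonneg_iff_of_pos_left ht).mp h
  intro θ hθ
  have h := hnonneg _ (hSsmul (-1) θ hθ)
  simp only [Pi.smul_apply, neg_one_smul, inner_neg_right, integral_neg] at h
  exact le_antisymm (neg_nonneg.mp h) (hnonneg θ hθ)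

theorem IsCellSolution.ae_eq [IsFiniteMeasure P] (hA : IsCaratheodoryGrowth A p c)
    (hAmono : ∀ ω x y, x ≠ y → 0 < ⟪A ω x - A ω y, x - y⟫)
    (hp : Measurable p) (hp1 : ∀ ω, 1 < p ω) (hpβ : ∀ ω, p ω ≤ β)
    {S : Set (Ω → E)} (hS : ∀ w ∈ S, MemLpVar w p P) (hSsub : ∀ u ∈ S, ∀ w ∈ S, u - w ∈ S)
    {ξ : E} {u v : Ω → E} (hsu : IsCellSolution P A S ξ u) (hu : u ∈ S) (hv : v ∈ S)
    (hsv : IsCellSolution P A S ξ v) : u =ᵐ[P] v := by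
  have hp0 : ∀ ω, 0 ≤ p ω := fun ω => zero_le_one.trans (hp1 ω).le
  have hd : MemLpVar (fun ω => u ω - v ω) p P := hS _ (hSsub u hu v hv)
  have hiu := hA.integrable_inner_comp hp1 ((hS u hu).const_add hp hp0 hpβ ξ) hd
  have hiv := hA.integrable_inner_comp hp1 ((hS v hv).const_add hp hp0 hpβ ξ) hd
  have hmono : ∀ ω, u ω ≠ v ω → 0 < ⟪A ω (ξ + u ω) - A ω (ξ + v ω), u ω - v ω⟫ := fun ω h => by
    simpa only [add_sub_add_left_eq_sub] using hAmono ω _ _ ((add_right_injective ξ).ne h)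
  have hcu : ∫ ω, ⟪A ω (ξ + u ω), u ω - v ω⟫ ∂P = 0 := hsu _ (hSsub u hu v hv)
  have hcv : ∫ ω, ⟪A ω (ξ + v ω), u ω - v ω⟫ ∂P = 0 := hsv _ (hSsub u hu v hv)
  have hzero : ∫ ω, (⟪A ω (ξ + u ω), u ω - v ω⟫ - ⟪A ω (ξ + v ω), u ω - v ω⟫) ∂P = 0 := by
    rw [integral_sub hiu hiv, hcu, hcv, sub_zero]
  have hnonneg : 0 ≤ fun ω => ⟪A ω (ξ + u ω), u ω - v ω⟫ - ⟪A ω (ξ + v ω), u ω - v ω⟫ :=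
    fun ω => by
      show 0 ≤ _ - _
      rw [← inner_sub_left]
      rcases eq_or_ne (u ω) (v ω) with h | h
      · simp [h]
      · exact (hmono ω h).le
  filter_upwards [(integral_eq_zero_iff_of_nonneg hnonneg (hiu.sub hiv)).mp hzero] with ω hω
  by_contra h
  exact (hmono ω h).ne' (by rw [inner_sub_left]; exact hω)

end CellProblem

theorem stmt15_general
    {d : ℕ}
    {Ω : Type*} [MeasurableSpace Ω] (P : Measure Ω) [IsProbabilityMeasure P]
    (p : Ω → ℝ) (hp : Measurable p)
    (α β : ℝ) (hα : 1 < α) (hαp : ∀ ω, α ≤ p ω) (hpβ : ∀ ω, p ω ≤ β)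
    (A : Ω → Md d → Md d)
    (hAmeas : ∀ ξ : Md d, Measurable (fun ω => A ω ξ))
    (hAcont : ∀ ω, Continuous (A ω))
    (hAmono : ∀ ω (ξ₁ ξ₂ : Md d), ξ₁ ≠ ξ₂ → 0 < ⟪A ω ξ₁ - A ω ξ₂, ξ₁ - ξ₂⟫)
    (c₁ : ℝ) (hc₁ : 0 < c₁)
    (hAgrowth : ∀ ω (ξ : Md d), ‖A ω ξ‖ ^ (p ω / (p ω - 1)) ≤ c₁ * ‖ξ‖ ^ p ω + c₁)
    -- `S` is a linear subspace of the measurable functions `Ω → M` with finite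
    -- `p(⬝)`-integral and zero mean:
    (S : Set (Ω → Md d))
    (hSmeas : ∀ w ∈ S, Measurable w)
    (hSfin : ∀ w ∈ S, ∫⁻ ω, ENNReal.ofReal (‖w ω‖ ^ p ω) ∂P < ⊤)
    (hSadd : ∀ w₁ ∈ S, ∀ w₂ ∈ S, w₁ + w₂ ∈ S)
    (hSsmul : ∀ (r : ℝ), ∀ w ∈ S, r • w ∈ S)
    (ξs : ℕ → Md d) (ξ : Md d) (hξs : Filter.Tendsto ξs Filter.atTop (nhds ξ))
    (vs : ℕ → (Ω → Md d)) (hvsS : ∀ j, vs j ∈ S)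
    (hvsol : ∀ j : ℕ, ∀ θ ∈ S, ∫ ω, ⟪A ω (ξs j + vs j ω), θ ω⟫ ∂P = 0)
    (hbdd : ∃ C : ℝ≥0, ∀ j, ∫⁻ ω, ENNReal.ofReal (‖vs j ω‖ ^ p ω) ∂P ≤ C)
    (η : Ω → Md d) (hη : η ∈ S)
    (hweak : ∀ θ : Ω → Md d, Measurable θ →
      (∫⁻ ω, ENNReal.ofReal (‖θ ω‖ ^ (p ω / (p ω - 1))) ∂P < ⊤) →
      Filter.Tendsto (fun j => ∫ ω, ⟪vs j ω, θ ω⟫ ∂P) Filter.atTop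
        (nhds (∫ ω, ⟪η ω, θ ω⟫ ∂P))) :
    (∀ θ ∈ S, ∫ ω, ⟪A ω (ξ + η ω), θ ω⟫ ∂P = 0)
    ∧ ∀ v ∈ S, (∀ θ ∈ S, ∫ ω, ⟪A ω (ξ + v ω), θ ω⟫ ∂P = 0) → η =ᵐ[P] v := by
  have hp1 : ∀ ω, 1 < p ω := fun ω => hα.trans_le (hαp ω)
  have hA : IsCaratheodoryGrowth A p c₁ := ⟨hAmeas, hAcont, hAgrowth⟩
  have hAmonotone : ∀ ω x y, 0 ≤ ⟪A ω x - A ω y, x - y⟫ := fun ω x y =>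
    (eq_or_ne x y).elim (fun h => by simp [h]) fun h => (hAmono ω x y h).le
  have hS : ∀ w ∈ S, MemLpVar w p P := fun w hw =>
    memLpVar_of_lintegral_lt_top hp (hSmeas w hw) (hSfin w hw)
  have hSsub : ∀ u ∈ S, ∀ w ∈ S, u - w ∈ S := fun u hu w hw => by
    simpa [sub_eq_add_neg] using hSadd u hu _ (hSsmul (-1) w hw)
  obtain ⟨C, hC⟩ := hbdd
  have hCreal : ∀ j, ∫ ω, ‖vs j ω‖ ^ p ω ∂P ≤ C := fun j => by
    rw [integral_eq_lintegral_of_nonneg_ae (ae_of_all _ fun ω => by positivity)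
      (hS _ (hvsS j)).2.1]
    exact ENNReal.toReal_le_of_le_ofReal C.coe_nonneg (by simpa using hC j)
  have hcell : IsCellSolution P A S ξ η :=
    isCellSolution_of_forall_integral_inner_comp_sub_nonneg hA hc₁.le hp hp1 hpβ hS hSadd hSsmul
      hη fun w hw => integral_inner_comp_sub_nonneg_of_tendstoWeaklyLpVar hA hc₁.le hAmonotone
        hp hp1 hpβ hS hSsub hξs hvsS hvsol hCreal (hS η hη) hweak hw
  exact ⟨hcell, fun v hv hv' => hcell.ae_eq hA hAmono hp hp1 hpβ hS hSsub hη hv hv'⟩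

/-- identification of weak limits of cell-problem solutions: if
`ξ_j → ξ`, `v_{ξ_j} ∈ S` solve the cell problems for `ξ_j`, are bounded in `L^{p(·)}`,
and converge weakly to `η ∈ S` (tested against all `θ` with finite `p'(·)`-integral),
then `η` solves the cell problem for `ξ`; in particular `η` coincides `P`-a.s. with
the unique solution of the cell problem for `ξ`. -/
theorem stmt15
    {d : ℕ} (hd : 1 ≤ d)
    {Ω : Type*} [MeasurableSpace Ω] (P : Measure Ω) [IsProbabilityMeasure P]
    (p : Ω → ℝ) (hp : Measurable p)
    (α β : ℝ) (hα : 1 < α) (hαp : ∀ ω, α ≤ p ω) (hpβ : ∀ ω, p ω ≤ β)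
    (A : Ω → Md d → Md d)
    (hAmeas : ∀ ξ : Md d, Measurable (fun ω => A ω ξ))
    (hAcont : ∀ ω, Continuous (A ω))
    (hAmono : ∀ ω (ξ₁ ξ₂ : Md d), ξ₁ ≠ ξ₂ → 0 < ⟪A ω ξ₁ - A ω ξ₂, ξ₁ - ξ₂⟫)
    (c₁ : ℝ) (hc₁ : 0 < c₁)
    (hAgrowth : ∀ ω (ξ : Md d), ‖A ω ξ‖ ^ (p ω / (p ω - 1)) ≤ c₁ * ‖ξ‖ ^ p ω + c₁)
    -- `S` is a linear subspace of the measurable functions `Ω → M` with finite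
    -- `p(⬝)`-integral and zero mean:
    (S : Set (Ω → Md d))
    (hSmeas : ∀ w ∈ S, Measurable w)
    (hSfin : ∀ w ∈ S, ∫⁻ ω, ENNReal.ofReal (‖w ω‖ ^ p ω) ∂P < ⊤)
    (hSzero : (0 : Ω → Md d) ∈ S)
    (hSadd : ∀ w₁ ∈ S, ∀ w₂ ∈ S, w₁ + w₂ ∈ S)
    (hSsmul : ∀ (r : ℝ), ∀ w ∈ S, r • w ∈ S)
    (hSmean : ∀ w ∈ S, ∫ ω, w ω ∂P = 0)
    (ξs : ℕ → Md d) (ξ : Md d) (hξs : Filter.Tendsto ξs Filter.atTop (nhds ξ))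
    (vs : ℕ → (Ω → Md d)) (hvsS : ∀ j, vs j ∈ S)
    (hvsol : ∀ j : ℕ, ∀ θ ∈ S, ∫ ω, ⟪A ω (ξs j + vs j ω), θ ω⟫ ∂P = 0)
    (hbdd : ∃ C : ℝ≥0, ∀ j, ∫⁻ ω, ENNReal.ofReal (‖vs j ω‖ ^ p ω) ∂P ≤ C)
    (η : Ω → Md d) (hη : η ∈ S)
    (hweak : ∀ θ : Ω → Md d, Measurable θ →
      (∫⁻ ω, ENNReal.ofReal (‖θ ω‖ ^ (p ω / (p ω - 1))) ∂P < ⊤) →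
      Filter.Tendsto (fun j => ∫ ω, ⟪vs j ω, θ ω⟫ ∂P) Filter.atTop
        (nhds (∫ ω, ⟪η ω, θ ω⟫ ∂P))) :
    (∀ θ ∈ S, ∫ ω, ⟪A ω (ξ + η ω), θ ω⟫ ∂P = 0)
    ∧ ∀ v ∈ S, (∀ θ ∈ S, ∫ ω, ⟪A ω (ξ + v ω), θ ω⟫ ∂P = 0) → η =ᵐ[P] v :=
  stmt15_general P p hp α β hα hαp hpβ A hAmeas hAcont hAmono c₁ hc₁ hAgrowth S hSmeas hSfin hSadd
    hSsmul ξs ξ hξs vs hvsS hvsol hbdd η hη hweak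
end

section
/- For every ε > 0 there exists δ₀ ∈ (0,1) such that for all p ∈ [α,β], all δ ∈ (0,δ₀], and all a, b ∈ ℝ^n: | |a+δb|^p − |a|^p − δ p |a|^{p−2} (a·b) | ≤ ε δ ( |a|^p + |b|^p ). -/
/-!
Write `a + δ • b` relative to `a`: `‖a + δ • b‖² = ‖a‖² (1 + x)` with `|x| ≲ |δ| ‖b‖ / ‖a‖`.
When `δ ‖b‖ ≤ η ‖a‖`, a second-order Taylor bound for `(1 + x) ^ (p / 2)` gives
`|normRpowRemainder p δ a b| ≲ ‖a‖ ^ (p - 2) (δ ‖b‖)² ≤ η δ (‖a‖ ^ p + ‖b‖ ^ p)`, uniformly for `p ≤ β`.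
When `η ‖a‖ ≤ δ ‖b‖`, each of the three terms is at most a multiple of `δ (2 δ / η) ^ (p - 1) ‖b‖ ^ p`,
which is small because `p - 1 ≥ α - 1 > 0`. Choose `η` for the first case, then `δ₀` for the second.
-/

open Set Filter Topology
open scoped RealInnerProductSpace

theorem abs_sub_sub_mul_le_of_hasDerivAt {f g g' : ℝ → ℝ} {a x K : ℝ}
    (hf : ∀ t ∈ uIcc a x, HasDerivAt f (g t) t) (hg : ∀ t ∈ uIcc a x, HasDerivAt g (g' t) t)
    (hK : ∀ t ∈ uIcc a x, |g' t| ≤ K) :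
    |f x - f a - g a * (x - a)| ≤ K * (x - a) ^ 2 := by
  have ha : a ∈ uIcc a x := left_mem_uIcc
  have hK₀ : 0 ≤ K := (abs_nonneg _).trans (hK a ha)
  have hg_lip : ∀ t ∈ uIcc a x, ‖g t - g a‖ ≤ K * |x - a| := fun t ht => calc
    ‖g t - g a‖ ≤ K * ‖t - a‖ := (convex_uIcc a x).norm_image_sub_le_of_norm_hasDerivWithin_le
        (fun s hs => (hg s hs).hasDerivWithinAt) hK ha ht
    _ ≤ K * |x - a| := mul_le_mul_of_nonneg_left (abs_sub_left_of_mem_uIcc ht) hK₀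
  have := (convex_uIcc a x).norm_image_sub_le_of_norm_hasDerivWithin_le
    (f := fun t => f t - g a * t) (fun t ht => ((hf t ht).sub
      ((hasDerivAt_id t).const_mul (g a))).hasDerivWithinAt.congr_deriv (by simp))
    hg_lip ha right_mem_uIcc
  rw [Real.norm_eq_abs, Real.norm_eq_abs] at this
  calc |f x - f a - g a * (x - a)| = |f x - g a * x - (f a - g a * a)| := by ring_nf
    _ ≤ K * |x - a| * |x - a| := this
    _ = K * (x - a) ^ 2 := by rw [mul_assoc, abs_mul_abs_self, sq]

theorem rpow_le_two_rpow_abs {y r : ℝ} (hy₀ : 1 / 2 ≤ y) (hy₁ : y ≤ 2) : y ^ r ≤ 2 ^ |r| := by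
  rcases le_total 0 r with hr | hr
  · rw [abs_of_nonneg hr]
    exact Real.rpow_le_rpow (by linarith) hy₁ hr
  · calc y ^ r ≤ (1 / 2) ^ r := Real.rpow_le_rpow_of_nonpos (by norm_num) hy₀ hr
      _ = 2 ^ |r| := by
        rw [abs_of_nonpos hr, one_div, Real.inv_rpow zero_le_two, ← Real.rpow_neg zero_le_two]

theorem exists_abs_one_add_rpow_sub_le {M : ℝ} (hM : 0 ≤ M) :
    ∃ C, 0 ≤ C ∧ ∀ q, |q| ≤ M → ∀ x : ℝ, |x| ≤ 1 / 2 →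
      |(1 + x) ^ q - 1 - q * x| ≤ C * x ^ 2 := by
  refine ⟨M * (M + 1) * 2 ^ (M + 2), by positivity, fun q hq x hx => ?_⟩
  have hbase : ∀ t ∈ uIcc 0 x, 1 / 2 ≤ 1 + t ∧ 1 + t ≤ 2 := fun t ht => by
    have ht' := abs_sub_left_of_mem_uIcc ht
    rw [sub_zero, sub_zero] at ht'
    have := abs_le.mp (ht'.trans hx)
    constructor <;> linarith
  have hderiv : ∀ r t : ℝ, 1 / 2 ≤ 1 + t →
      HasDerivAt (fun s => (1 + s) ^ r) (r * (1 + t) ^ (r - 1)) t := fun r t ht =>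
    ((hasDerivAt_id t).const_add 1).rpow_const (Or.inl (by simp; linarith)) |>.congr_deriv
      (by simp)
  have hq1 : |q - 1| ≤ M + 1 := (abs_sub _ _).trans (by simpa using hq)
  have hq2 : |q - 1 - 1| ≤ M + 2 := (abs_sub _ _).trans (by norm_num; linarith)
  have := abs_sub_sub_mul_le_of_hasDerivAt (a := 0) (x := x) (K := M * (M + 1) * 2 ^ (M + 2))
    (fun t ht => hderiv q t (hbase t ht).1)
    (fun t ht => (hderiv (q - 1) t (hbase t ht).1).const_mul q) (fun t ht => by
      obtain ⟨h₀, h₁⟩ := hbase t ht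
      rw [abs_mul, abs_mul, ← mul_assoc, abs_of_pos (Real.rpow_pos_of_pos (by linarith) _)]
      have := (rpow_le_two_rpow_abs (r := q - 1 - 1) h₀ h₁).trans
        (Real.rpow_le_rpow_of_exponent_le one_le_two hq2)
      gcongr)
  simpa using this

theorem rpow_sub_one_mul_le_rpow_add_rpow {x y p : ℝ} (hx : 0 ≤ x) (hy : 0 ≤ y) (hp : 1 ≤ p) :
    x ^ (p - 1) * y ≤ x ^ p + y ^ p := by
  have hm := le_max_left x y
  calc x ^ (p - 1) * y ≤ max x y ^ (p - 1) * max x y := by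
        gcongr
        exact le_max_right x y
    _ = max x y ^ p := by
        rw [← Real.rpow_add_one' (hx.trans hm) (by linarith), sub_add_cancel]
    _ ≤ x ^ p + y ^ p := by
        rcases max_choice x y with h | h <;> rw [h]
        · linarith [Real.rpow_nonneg hy p]
        · linarith [Real.rpow_nonneg hx p]

theorem rpow_sub_two_mul_sq_le {x y δ η p : ℝ} (hx : 0 < x) (hy : 0 ≤ y) (hδ : 0 ≤ δ)
    (hp : 1 ≤ p) (h : δ * y ≤ η * x) :
    x ^ (p - 2) * (δ * y) ^ 2 ≤ η * δ * (x ^ p + y ^ p) := by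
  have hη : 0 ≤ η := nonneg_of_mul_nonneg_left ((mul_nonneg hδ hy).trans h) hx
  calc x ^ (p - 2) * (δ * y) ^ 2 ≤ x ^ (p - 2) * ((η * x) * (δ * y)) := by
        rw [sq]; gcongr
    _ = η * δ * (x ^ (p - 2 + 1) * y) := by rw [Real.rpow_add_one hx.ne']; ring
    _ ≤ η * δ * (x ^ p + y ^ p) := by
        gcongr
        rw [show p - 2 + 1 = p - 1 by ring]
        exact rpow_sub_one_mul_le_rpow_add_rpow hx.le hy hp

theorem exists_mem_Ioo_mul_rpow_le (K : ℝ) {γ ε : ℝ} (hγ : 0 < γ) (hε : 0 < ε) :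
    ∃ s ∈ Ioo (0 : ℝ) 1, K * s ^ γ ≤ ε := by
  have hlim : Tendsto (fun s : ℝ => K * s ^ γ) (𝓝[>] 0) (𝓝 0) := by
    have h := (Real.continuousAt_rpow_const 0 γ (Or.inr hγ.le)).tendsto.const_mul K
    rw [Real.zero_rpow hγ.ne', mul_zero] at h
    exact h.mono_left nhdsWithin_le_nhds
  obtain ⟨s, hs, hsε⟩ :=
    (Eventually.and (Ioo_mem_nhdsGT zero_lt_one) (hlim.eventually (ge_mem_nhds hε))).exists
  exact ⟨s, hs, hsε⟩

section Remainder

variable {E : Type*} [NormedAddCommGroup E] [InnerProductSpace ℝ E]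

noncomputable def normRpowRemainder (p δ : ℝ) (a b : E) : ℝ :=
  ‖a + δ • b‖ ^ p - ‖a‖ ^ p - δ * p * (‖a‖ ^ (p - 2) * ⟪a, b⟫)

theorem rpow_sub_two_mul_abs_inner_le (p : ℝ) (a b : E) :
    ‖a‖ ^ (p - 2) * |⟪a, b⟫| ≤ ‖a‖ ^ (p - 1) * ‖b‖ := by
  rcases eq_or_ne a 0 with rfl | ha
  · simp only [inner_zero_left, abs_zero, mul_zero, norm_zero]
    positivity
  · calc ‖a‖ ^ (p - 2) * |⟪a, b⟫| ≤ ‖a‖ ^ (p - 2) * (‖a‖ * ‖b‖) := by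
          gcongr
          exact abs_real_inner_le_norm a b
      _ = ‖a‖ ^ (p - 1) * ‖b‖ := by
          rw [← mul_assoc, ← Real.rpow_add_one (norm_ne_zero_iff.mpr ha)]
          ring_nf

theorem exists_abs_normRpowRemainder_le {M : ℝ} (hM : 0 ≤ M) :
    ∃ C, 0 ≤ C ∧ ∀ p, |p| ≤ M → ∀ (δ : ℝ) (a b : E), a ≠ 0 → 6 * (|δ| * ‖b‖) ≤ ‖a‖ →
      |normRpowRemainder p δ a b| ≤ C * ‖a‖ ^ (p - 2) * (δ * ‖b‖) ^ 2 := by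
  obtain ⟨C, hC, hTaylor⟩ := exists_abs_one_add_rpow_sub_le (M := M / 2) (by positivity)
  refine ⟨9 * C + M / 2, by positivity, fun p hp δ a b ha hab => ?_⟩
  have hA : 0 < ‖a‖ := norm_pos_iff.mpr ha
  have hAp : ‖a‖ ^ p = ‖a‖ ^ (p - 2) * ‖a‖ ^ 2 := by
    rw [Real.rpow_sub hA, Real.rpow_two, div_mul_cancel₀ _ (by positivity)]
  obtain ⟨x, hxA⟩ : ∃ x, x * ‖a‖ ^ 2 = 2 * δ * ⟪a, b⟫ + (δ * ‖b‖) ^ 2 :=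
    ⟨_, div_mul_cancel₀ _ (by positivity)⟩
  have hx_abs : |x| * ‖a‖ ≤ 3 * (|δ| * ‖b‖) := by
    have hcs := abs_real_inner_le_norm a b
    have : |x| * ‖a‖ ^ 2 ≤ 3 * (|δ| * ‖b‖) * ‖a‖ :=
      calc |x| * ‖a‖ ^ 2 = |2 * δ * ⟪a, b⟫ + (δ * ‖b‖) ^ 2| := by
            rw [← hxA, abs_mul, abs_sq]
        _ ≤ 2 * |δ| * |⟪a, b⟫| + (|δ| * ‖b‖) ^ 2 := by
            refine (abs_add_le _ _).trans_eq ?_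
            rw [abs_mul, abs_mul, abs_two, abs_sq, mul_pow, mul_pow, sq_abs]
        _ ≤ 3 * (|δ| * ‖b‖) * ‖a‖ := by
            nlinarith [abs_nonneg δ, mul_nonneg (abs_nonneg δ) (norm_nonneg b)]
    nlinarith
  have hx_half : |x| ≤ 1 / 2 := by nlinarith
  have hpow : ‖a + δ • b‖ ^ p = ‖a‖ ^ p * (1 + x) ^ (p / 2) := by
    have hsq : ‖a + δ • b‖ ^ 2 = ‖a‖ ^ 2 * (1 + x) := by
      rw [norm_add_sq_real, norm_smul, inner_smul_right, mul_add, mul_comm _ x, hxA,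
        Real.norm_eq_abs, mul_pow, sq_abs]
      ring
    rw [← Real.sqrt_sq (norm_nonneg (a + δ • b)), ← Real.rpow_div_two_eq_sqrt _ (sq_nonneg _),
      hsq, Real.mul_rpow (sq_nonneg _) (by linarith [abs_le.mp hx_half]),
      Real.rpow_div_two_eq_sqrt _ (sq_nonneg _), Real.sqrt_sq (norm_nonneg a)]
  have hsplit : normRpowRemainder p δ a b =
      ‖a‖ ^ p * ((1 + x) ^ (p / 2) - 1 - p / 2 * x) + p / 2 * ‖a‖ ^ (p - 2) * (δ * ‖b‖) ^ 2 := by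
    rw [normRpowRemainder, hpow]
    linear_combination (p / 2 * ‖a‖ ^ (p - 2)) * hxA + (p / 2 * x) * hAp
  have hp2 : |p / 2| ≤ M / 2 := by rw [abs_div, abs_two]; linarith
  have hAp2 : 0 ≤ ‖a‖ ^ (p - 2) := by positivity
  have hxA_sq : (x * ‖a‖) ^ 2 ≤ 9 * (δ * ‖b‖) ^ 2 :=
    calc (x * ‖a‖) ^ 2 = (|x| * ‖a‖) ^ 2 := by rw [mul_pow, mul_pow, sq_abs]
      _ ≤ (3 * (|δ| * ‖b‖)) ^ 2 := pow_le_pow_left₀ (by positivity) hx_abs 2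
      _ = 9 * (δ * ‖b‖) ^ 2 := by rw [mul_pow, mul_pow, mul_pow, sq_abs]; ring
  calc |normRpowRemainder p δ a b|
      ≤ ‖a‖ ^ p * (C * x ^ 2) + M / 2 * ‖a‖ ^ (p - 2) * (δ * ‖b‖) ^ 2 := by
        rw [hsplit]
        refine (abs_add_le _ _).trans (add_le_add ?_ ?_)
        · rw [abs_mul, abs_of_nonneg (by positivity)]
          gcongr
          exact hTaylor _ hp2 x hx_half
        · rw [abs_mul, abs_mul, abs_of_nonneg hAp2, abs_sq]
          gcongr
    _ ≤ (9 * C + M / 2) * ‖a‖ ^ (p - 2) * (δ * ‖b‖) ^ 2 := by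
        rw [hAp]
        nlinarith [mul_le_mul_of_nonneg_left hxA_sq (mul_nonneg hC hAp2)]

theorem exists_abs_normRpowRemainder_le_of_near {M : ℝ} (hM : 0 ≤ M) :
    ∃ C, 0 ≤ C ∧ ∀ p, 1 ≤ p → p ≤ M → ∀ η δ : ℝ, η ≤ 1 / 6 → 0 ≤ δ → ∀ a b : E,
      δ * ‖b‖ < η * ‖a‖ → |normRpowRemainder p δ a b| ≤ C * η * δ * (‖a‖ ^ p + ‖b‖ ^ p) := by
  obtain ⟨C, hC, hquad⟩ := exists_abs_normRpowRemainder_le (E := E) hM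
  refine ⟨C, hC, fun p hp hpM η δ hη hδ a b hab => ?_⟩
  have hA : 0 < ‖a‖ := (norm_nonneg a).lt_of_ne' fun h => by
    rw [h, mul_zero] at hab
    exact (mul_nonneg hδ (norm_nonneg b)).not_gt hab
  calc |normRpowRemainder p δ a b| ≤ C * (‖a‖ ^ (p - 2) * (δ * ‖b‖) ^ 2) := by
        rw [← mul_assoc]
        refine hquad p (abs_le.mpr ⟨by linarith, hpM⟩) δ a b (norm_pos_iff.mp hA) ?_
        rw [abs_of_nonneg hδ]
        nlinarith
    _ ≤ C * (η * δ * (‖a‖ ^ p + ‖b‖ ^ p)) :=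
        mul_le_mul_of_nonneg_left (rpow_sub_two_mul_sq_le hA (norm_nonneg b) hδ hp hab.le) hC
    _ = C * η * δ * (‖a‖ ^ p + ‖b‖ ^ p) := by ring

theorem abs_normRpowRemainder_le_of_far {p η δ : ℝ} (hp : 1 ≤ p) (hη₀ : 0 < η) (hη₁ : η ≤ 1)
    (hδ : 0 ≤ δ) {a b : E} (hab : η * ‖a‖ ≤ δ * ‖b‖) :
    |normRpowRemainder p δ a b| ≤ (4 / η + p) * (2 * δ / η) ^ (p - 1) * δ * ‖b‖ ^ p := by
  set r := 2 * δ / η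
  have hr : 0 ≤ r := by positivity
  have hB := norm_nonneg b
  have ha_le : ‖a‖ ≤ r * ‖b‖ := by
    rw [div_mul_eq_mul_div, le_div_iff₀ hη₀]
    nlinarith
  have hab_le : ‖a + δ • b‖ ≤ r * ‖b‖ := by
    refine (norm_add_le _ _).trans ?_
    rw [norm_smul, Real.norm_of_nonneg hδ, div_mul_eq_mul_div, le_div_iff₀ hη₀]
    nlinarith [mul_nonneg hδ hB]
  have hsplit : ∀ y : ℝ, 0 ≤ y → y ^ p = y ^ (p - 1) * y := fun y hy => by
    rw [← Real.rpow_add_one' hy (by linarith), sub_add_cancel]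
  have hbound : ∀ y, 0 ≤ y → y ≤ r * ‖b‖ → y ^ p ≤ r ^ (p - 1) * r * ‖b‖ ^ p := fun y hy h => by
    calc y ^ p ≤ (r * ‖b‖) ^ p := by gcongr
      _ = r ^ (p - 1) * r * ‖b‖ ^ p := by rw [Real.mul_rpow hr hB, ← hsplit r hr]
  have hinner : |δ * p * (‖a‖ ^ (p - 2) * ⟪a, b⟫)| ≤ δ * p * (r ^ (p - 1) * ‖b‖ ^ p) := by
    rw [abs_mul, abs_mul (‖a‖ ^ _), abs_of_nonneg (by positivity : 0 ≤ δ * p),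
      abs_of_nonneg (by positivity : 0 ≤ ‖a‖ ^ (p - 2))]
    refine mul_le_mul_of_nonneg_left ?_ (by positivity)
    calc ‖a‖ ^ (p - 2) * |⟪a, b⟫| ≤ ‖a‖ ^ (p - 1) * ‖b‖ := rpow_sub_two_mul_abs_inner_le p a b
      _ ≤ (r * ‖b‖) ^ (p - 1) * ‖b‖ := by gcongr
      _ = r ^ (p - 1) * ‖b‖ ^ p := by rw [Real.mul_rpow hr hB, mul_assoc, ← hsplit _ hB]
  have h₁ := hbound _ (norm_nonneg _) hab_le
  have h₂ := hbound _ (norm_nonneg _) ha_le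
  have h₃ := abs_le.mp hinner
  have hsum : r ^ (p - 1) * r * ‖b‖ ^ p * 2 + δ * p * (r ^ (p - 1) * ‖b‖ ^ p) =
      (4 / η + p) * r ^ (p - 1) * δ * ‖b‖ ^ p := by
    simp only [r]
    field_simp
    ring
  rw [normRpowRemainder, abs_le]
  constructor <;> nlinarith [Real.rpow_nonneg (norm_nonneg a) p,
    Real.rpow_nonneg (norm_nonneg (a + δ • b)) p]

end Remainder

theorem stmt16_general
    {n : ℕ}
    (α β : ℝ) (hα : 1 < α) (hαβ : α ≤ β) :
    ∀ ε : ℝ, 0 < ε → ∃ δ₀ : ℝ, 0 < δ₀ ∧ δ₀ < 1 ∧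
      ∀ p : ℝ, α ≤ p → p ≤ β →
      ∀ δ : ℝ, 0 < δ → δ ≤ δ₀ →
      ∀ a b : EuclideanSpace ℝ (Fin n),
        |‖a + δ • b‖ ^ p - ‖a‖ ^ p - δ * p * (‖a‖ ^ (p - 2) * ⟪a, b⟫)|
          ≤ ε * δ * (‖a‖ ^ p + ‖b‖ ^ p) := by
  intro ε hε
  have hβ : 0 ≤ β := by linarith
  obtain ⟨C, hC, hnear⟩ := exists_abs_normRpowRemainder_le_of_near
    (E := EuclideanSpace ℝ (Fin n)) hβ
  set η := min (1 / 6) (ε / (C + 1))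
  have hη₀ : 0 < η := lt_min (by norm_num) (by positivity)
  have hη₆ : η ≤ 1 / 6 := min_le_left _ _
  have hCη : C * η ≤ ε := calc
    C * η ≤ (C + 1) * (ε / (C + 1)) := by gcongr; linarith; exact min_le_right _ _
    _ = ε := mul_div_cancel₀ _ (by positivity)
  obtain ⟨s, ⟨hs₀, hs₁⟩, hsε⟩ := exists_mem_Ioo_mul_rpow_le (4 / η + β) (sub_pos.mpr hα) hε
  refine ⟨η * s / 2, by positivity, by nlinarith, fun p hαp hpβ δ hδ hδ₀ a b => ?_⟩
  change |normRpowRemainder p δ a b| ≤ _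
  rcases le_or_gt (η * ‖a‖) (δ * ‖b‖) with hfar | hclose
  · have hr : 2 * δ / η ≤ s := by rw [div_le_iff₀ hη₀]; linarith
    have hb_le := le_add_of_nonneg_left (a := ‖b‖ ^ p) (Real.rpow_nonneg (norm_nonneg a) p)
    calc |normRpowRemainder p δ a b| ≤ (4 / η + p) * (2 * δ / η) ^ (p - 1) * δ * ‖b‖ ^ p :=
          abs_normRpowRemainder_le_of_far (by linarith) hη₀ (by linarith) hδ.le hfar
      _ ≤ (4 / η + β) * s ^ (α - 1) * δ * ‖b‖ ^ p := by
          gcongr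
          calc (2 * δ / η) ^ (p - 1) ≤ s ^ (p - 1) := by gcongr; linarith
            _ ≤ s ^ (α - 1) := Real.rpow_le_rpow_of_exponent_ge hs₀ hs₁.le (by linarith)
      _ ≤ ε * δ * (‖a‖ ^ p + ‖b‖ ^ p) := by gcongr
  · calc |normRpowRemainder p δ a b| ≤ C * η * δ * (‖a‖ ^ p + ‖b‖ ^ p) :=
          hnear p (by linarith) hpβ η δ hη₆ hδ.le a b hclose
      _ ≤ ε * δ * (‖a‖ ^ p + ‖b‖ ^ p) := by gcongr

/-- the elementary inequality used in Lemma `l_sol-2sca`: for every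
`ε > 0` there is `δ₀ ∈ (0,1)` such that for all `p ∈ [α,β]`, all `δ ∈ (0,δ₀]` and all
`a, b ∈ ℝ^n`:
`| |a+δb|^p − |a|^p − δ p |a|^{p−2} (a·b) | ≤ ε δ (|a|^p + |b|^p)`.
(Here `|a|^{p-2}(a·b)` vanishes for `a = 0` since `a·b = 0`, matching the convention
`|a|^{p-2} a = 0` for `a = 0`.) -/
theorem stmt16
    {n : ℕ} (hn : 1 ≤ n)
    (α β : ℝ) (hα : 1 < α) (hαβ : α ≤ β) :
    ∀ ε : ℝ, 0 < ε → ∃ δ₀ : ℝ, 0 < δ₀ ∧ δ₀ < 1 ∧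
      ∀ p : ℝ, α ≤ p → p ≤ β →
      ∀ δ : ℝ, 0 < δ → δ ≤ δ₀ →
      ∀ a b : EuclideanSpace ℝ (Fin n),
        |‖a + δ • b‖ ^ p - ‖a‖ ^ p - δ * p * (‖a‖ ^ (p - 2) * ⟪a, b⟫)|
          ≤ ε * δ * (‖a‖ ^ p + ‖b‖ ^ p) :=
  stmt16_general α β hα hαβ
end
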